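/- arXiv:1107.2630 — 9 statements merged into one kernel-verified Lean document; each statement's English description precedes it below -/
import Mathlib

section
/- If G is a graph on n vertices with χ(G) = n - 1, then ω(G) ≥ n - 1. -/
open SimpleGraph

/-- If there is a "coloring-like" map `f : V → V` avoiding two distinct values,
then `G` is colorable with `card V - 2` colors. -/
lemma colorable_aux {V : Type*} [Fintype V] (G : SimpleGraph V)
    (p q : V) (hpq : p ≠ q) (f : V → V)
    (hf : ∀ x, f x ≠ p ∧ f x ≠ q)
    (hc : ∀ u v, G.Adj u v → f u ≠ f v) :
    G.Colorable (Fintype.card V - 2) := by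
  classical
  let C : G.Coloring {x : V // x ≠ p ∧ x ≠ q} :=
    SimpleGraph.Coloring.mk (fun v => ⟨f v, hf v⟩)
      (fun {u v} h hh => hc u v h (congrArg Subtype.val hh))
  have hcol := C.colorable
  have hcard : Fintype.card {x : V // x ≠ p ∧ x ≠ q} = Fintype.card V - 2 := by
    rw [Fintype.card_subtype]
    have hfil : (Finset.univ.filter fun x : V => x ≠ p ∧ x ≠ q)
        = Finset.univ \ {p, q} := by
      ext x
      simp [not_or]
    rw [hfil, Finset.card_sdiff_of_subset (Finset.subset_univ _)]
    have : ({p, q} : Finset V).card = 2 := by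
      rw [Finset.card_insert_of_notMem (by simpa using hpq), Finset.card_singleton]
    rw [this, Finset.card_univ]
  rwa [hcard] at hcol

/-- Two disjoint non-adjacent pairs give an `(n-2)`-coloring. -/
lemma two_pairs_colorable {V : Type*} [Fintype V] (G : SimpleGraph V)
    (a b c d : V) (hab : a ≠ b) (hcd : c ≠ d) (hac : a ≠ c) (had : a ≠ d)
    (hbc : b ≠ c) (hbd : b ≠ d) (hnab : ¬G.Adj a b) (hncd : ¬G.Adj c d) :
    G.Colorable (Fintype.card V - 2) := by
  classical
  apply colorable_aux G b d hbd (fun x => if x = b then a else if x = d then c else x)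
  · intro x
    constructor
    · split_ifs with h1 h2 <;> simp_all [ne_comm]
    · split_ifs with h1 h2 <;> simp_all [ne_comm]
  · intro u v hadj heq
    have hne : u ≠ v := hadj.ne
    split_ifs at heq with h1 h2 h3 h4 <;> subst_vars <;>
      simp_all [G.adj_comm]

/-- Three pairwise non-adjacent vertices give an `(n-2)`-coloring. -/
lemma triple_colorable {V : Type*} [Fintype V] (G : SimpleGraph V)
    (a b c : V) (hab : a ≠ b) (hac : a ≠ c) (hbc : b ≠ c)
    (hnab : ¬G.Adj a b) (hnac : ¬G.Adj a c) (hnbc : ¬G.Adj b c) :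
    G.Colorable (Fintype.card V - 2) := by
  classical
  apply colorable_aux G b c hbc (fun x => if x = b then a else if x = c then a else x)
  · intro x
    constructor
    · split_ifs with h1 h2 <;> simp_all [ne_comm]
    · split_ifs with h1 h2 <;> simp_all [ne_comm]
  · intro u v hadj heq
    have hne : u ≠ v := hadj.ne
    split_ifs at heq with h1 h2 h3 h4 <;> subst_vars <;>
      simp_all [G.adj_comm]

/-- Combinatorial core: from a non-adjacent pair `(a,b)`, a non-adjacent pair
avoiding `a` and a non-adjacent pair avoiding `b`, we can find either two disjoint
non-adjacent pairs or a non-adjacent triple. -/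
lemma exists_config {V : Type*} (G : SimpleGraph V) (a b u v u' v' : V)
    (hab : a ≠ b) (hnab : ¬G.Adj a b)
    (hu : u ≠ a) (hv : v ≠ a) (huv : u ≠ v) (hnuv : ¬G.Adj u v)
    (hu' : u' ≠ b) (hv' : v' ≠ b) (hu'v' : u' ≠ v') (hnu'v' : ¬G.Adj u' v') :
    (∃ x y z w : V, x ≠ y ∧ z ≠ w ∧ x ≠ z ∧ x ≠ w ∧ y ≠ z ∧ y ≠ w ∧
      ¬G.Adj x y ∧ ¬G.Adj z w) ∨
    (∃ x y z : V, x ≠ y ∧ x ≠ z ∧ y ≠ z ∧ ¬G.Adj x y ∧ ¬G.Adj x z ∧ ¬G.Adj y z) := by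
  classical
  by_cases hbu : b = u
  case neg =>
    by_cases hbv : b = v
    case neg =>
      -- pairs (a,b) and (u,v) are disjoint
      exact Or.inl ⟨a, b, u, v, hab, huv, (Ne.symm hu), (Ne.symm hv),
        hbu, hbv, hnab, hnuv⟩
    case pos =>
      subst hbv
      -- pair (u, b), u ≠ a, u ≠ b
      exact aux G a b u u' v' hab hnab hu huv hnuv hu' hv' hu'v' hnu'v'
  case pos =>
    subst hbu
    -- pair (b, v) i.e. (v, b), v ≠ a, v ≠ b
    exact aux G a b v u' v' hab hnab hv (Ne.symm huv)
      (fun h => hnuv (h.symm)) hu' hv' hu'v' hnu'v'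
where
  aux (G : SimpleGraph V) (a b c u' v' : V)
      (hab : a ≠ b) (hnab : ¬G.Adj a b)
      (hca : c ≠ a) (hcb : c ≠ b) (hncb : ¬G.Adj c b)
      (hu' : u' ≠ b) (hv' : v' ≠ b) (hu'v' : u' ≠ v') (hnu'v' : ¬G.Adj u' v') :
      (∃ x y z w : V, x ≠ y ∧ z ≠ w ∧ x ≠ z ∧ x ≠ w ∧ y ≠ z ∧ y ≠ w ∧
        ¬G.Adj x y ∧ ¬G.Adj z w) ∨
      (∃ x y z : V, x ≠ y ∧ x ≠ z ∧ y ≠ z ∧ ¬G.Adj x y ∧ ¬G.Adj x z ∧ ¬G.Adj y z) := by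
    classical
    by_cases hau : a = u'
    case neg =>
      by_cases hav : a = v'
      case neg =>
        -- pairs (a,b) and (u',v') disjoint
        exact Or.inl ⟨a, b, u', v', hab, hu'v', hau, hav,
          (Ne.symm hu'), (Ne.symm hv'), hnab, hnu'v'⟩
      case pos =>
        subst hav
        -- pair (u', a), u' ≠ b, u' ≠ a
        exact aux2 G a b c u' hab hnab hca hcb hncb hu'v' hu' hnu'v'
    case pos =>
      subst hau
      -- pair (a, v') i.e. (v', a), v' ≠ b, v' ≠ a
      exact aux2 G a b c v' hab hnab hca hcb hncb (Ne.symm hu'v') hv'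
        (fun hh => hnu'v' hh.symm)
  aux2 (G : SimpleGraph V) (a b c d : V)
      (hab : a ≠ b) (hnab : ¬G.Adj a b)
      (hca : c ≠ a) (hcb : c ≠ b) (hncb : ¬G.Adj c b)
      (hda : d ≠ a) (hdb : d ≠ b) (hnda : ¬G.Adj d a) :
      (∃ x y z w : V, x ≠ y ∧ z ≠ w ∧ x ≠ z ∧ x ≠ w ∧ y ≠ z ∧ y ≠ w ∧
        ¬G.Adj x y ∧ ¬G.Adj z w) ∨
      (∃ x y z : V, x ≠ y ∧ x ≠ z ∧ y ≠ z ∧ ¬G.Adj x y ∧ ¬G.Adj x z ∧ ¬G.Adj y z) := by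
    classical
    by_cases hcd : c = d
    case pos =>
      subst hcd
      -- triple (c, a, b)
      exact Or.inr ⟨c, a, b, hca, hcb, hab,
        (fun hh => hnda hh), hncb, hnab⟩
    case neg =>
      -- pairs (c, b) and (d, a) disjoint
      exact Or.inl ⟨c, b, d, a, hcb, hda, hcd, hca,
        (Ne.symm hdb), (Ne.symm hab), hncb, hnda⟩

theorem stmt_1 {V : Type*} [Fintype V] (G : SimpleGraph V) (n : ℕ)
    (hn : Fintype.card V = n) (h : G.chromaticNumber = ((n - 1 : ℕ) : ℕ∞)) :
    n - 1 ≤ G.cliqueNum := by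
  classical
  subst hn
  set n := Fintype.card V with hn
  rcases Nat.lt_or_ge n 2 with h2 | h2
  · have : n - 1 = 0 := by omega
    simp [this]
  · -- If the whole graph is complete, done.
    by_cases hcomp : ∃ a b : V, a ≠ b ∧ ¬G.Adj a b
    case neg =>
      push_neg at hcomp
      have hclique : G.IsClique ↑(Finset.univ : Finset V) := by
        intro x _ y _ hxy
        exact hcomp x y hxy
      have := SimpleGraph.IsClique.card_le_cliqueNum (tc := hclique)
      simp only [Finset.card_univ] at this
      omega
    case pos =>
      obtain ⟨a, b, hab, hnab⟩ := hcomp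
      -- If removing a (or b) leaves a clique, done.
      have hdone : ∀ x : V, G.IsClique ↑(Finset.univ \ ({x} : Finset V)) →
          n - 1 ≤ G.cliqueNum := by
        intro x hcl
        have := SimpleGraph.IsClique.card_le_cliqueNum (tc := hcl)
        rwa [Finset.card_sdiff_of_subset (Finset.subset_univ _), Finset.card_singleton,
          Finset.card_univ] at this
      by_cases hca : G.IsClique ↑(Finset.univ \ ({a} : Finset V))
      case pos => exact hdone a hca
      case neg =>
      by_cases hcb : G.IsClique ↑(Finset.univ \ ({b} : Finset V))
      case pos => exact hdone b hcb
      case neg =>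
      exfalso
      rw [SimpleGraph.isClique_iff, Set.Pairwise] at hca hcb
      push_neg at hca hcb
      obtain ⟨u, hu, v, hv, huv, hnuv⟩ := hca
      obtain ⟨u', hu', v', hv', hu'v', hnu'v'⟩ := hcb
      simp only [Finset.coe_sdiff, Finset.coe_univ, Finset.coe_singleton,
        Set.mem_diff, Set.mem_univ, Set.mem_singleton_iff, true_and] at hu hv hu' hv'
      have hcfg := exists_config G a b u v u' v' hab hnab hu hv huv hnuv hu' hv' hu'v' hnu'v'
      have hcol : G.Colorable (n - 2) := by
        rcases hcfg with ⟨x, y, z, w, h1, h3, h4, h5, h6, h7, h8, h9⟩ |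
          ⟨x, y, z, h1, h3, h4, h5, h6, h7⟩
        · exact two_pairs_colorable G x y z w h1 h3 h4 h5 h6 h7 h8 h9
        · exact triple_colorable G x y z h1 h3 h4 h5 h6 h7
      have hle : G.chromaticNumber ≤ ((n - 2 : ℕ) : ℕ∞) := hcol.chromaticNumber_le
      rw [h] at hle
      have : (n - 1 : ℕ) ≤ (n - 2 : ℕ) := by exact_mod_cast hle
      omega
end

section
/- If G is a graph on n vertices with χ(G) = n - 2, then ω(G) ≥ n - 3. -/
open Finset

lemma aux_reduce {V : Type*} [Fintype V] (G : SimpleGraph V) {m : ℕ}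
    (d : V → Fin m) (hd : ∀ u v, G.Adj u v → d u ≠ d v) (j : Fin m)
    (hj : ∀ v, d v ≠ j) : G.Colorable (m - 1) := by
  classical
  let C : G.Coloring {x : Fin m // x ≠ j} :=
    SimpleGraph.Coloring.mk (fun v => ⟨d v, hj v⟩)
      (fun hadj => by simpa [Subtype.ext_iff] using hd _ _ hadj)
  have hc := C.colorable
  have hcard : Fintype.card {x : Fin m // x ≠ j} = m - 1 := by
    simp [Fintype.card_subtype_compl, Fintype.card_subtype_eq]
  rwa [hcard] at hc

theorem stmt_2 {V : Type*} [Fintype V] (G : SimpleGraph V) (n : ℕ)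
    (hn : Fintype.card V = n) (h : G.chromaticNumber = ((n - 2 : ℕ) : ℕ∞)) :
    n - 3 ≤ G.cliqueNum := by
  classical
  rcases le_or_gt n 3 with hn3 | hn3
  · simp [Nat.sub_eq_zero_of_le hn3]
  -- n ≥ 4
  have hcol : G.Colorable (n - 2) := SimpleGraph.chromaticNumber_le_iff_colorable.mp h.le
  obtain ⟨c⟩ := hcol
  -- contradiction tool
  have hnc : ¬ G.Colorable (n - 3) := by
    intro hc
    have h1 := hc.chromaticNumber_le
    rw [h] at h1
    have h2 : (n - 2 : ℕ) ≤ n - 3 := by exact_mod_cast h1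
    omega
  have hnc' : ¬ G.Colorable (n - 2 - 1) := by
    have : n - 2 - 1 = n - 3 := by omega
    rwa [this]
  -- fibers
  set fib : Fin (n - 2) → Finset V := fun i => univ.filter (fun v => c v = i) with hfib
  have hmemfib : ∀ (v : V) (i : Fin (n-2)), v ∈ fib i ↔ c v = i := by
    intro v i; simp [hfib]
  -- merge lemma
  have merge : ∀ i j : Fin (n - 2), i ≠ j →
      (∀ u v : V, c u = i → c v = j → ¬ G.Adj u v) → False := by
    intro i j hij hno
    apply hnc'
    refine aux_reduce G (fun v => if c v = j then i else c v) ?_ j ?_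
    · intro u v hadj
      have hcuv : c u ≠ c v := c.valid hadj
      by_cases hu : c u = j <;> by_cases hv : c v = j <;> simp [hu, hv, hcuv]
      · omega
      · intro hic; exact hno v u hic.symm hu hadj.symm
      · intro hic; exact hno u v hic hv hadj
    · intro v
      by_cases hv : c v = j <;> simp [hv, hij]
  -- every fiber nonempty
  have hne : ∀ i : Fin (n - 2), (fib i).Nonempty := by
    intro i
    by_contra hemp
    apply hnc'
    refine aux_reduce G c (fun u v hadj => c.valid hadj) i ?_
    intro v hv
    exact hemp ⟨v, (hmemfib v i).mpr hv⟩
  -- counting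
  have hsum : ∑ i : Fin (n - 2), (fib i).card = n := by
    have h0 := Finset.card_eq_sum_card_fiberwise
      (s := (univ : Finset V)) (t := (univ : Finset (Fin (n-2)))) (f := fun v => c v)
      (fun x _ => Finset.mem_univ (c x))
    rw [Finset.card_univ, hn] at h0
    exact h0.symm
  have hsum1 : ∑ i : Fin (n - 2), ((fib i).card - 1) = 2 := by
    have hrw : ∀ i : Fin (n - 2), (fib i).card = ((fib i).card - 1) + 1 := by
      intro i
      have := Finset.card_pos.mpr (hne i)
      omega
    have : ∑ i : Fin (n - 2), (fib i).card
        = (∑ i : Fin (n - 2), ((fib i).card - 1)) + (n - 2) := by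
      calc ∑ i : Fin (n - 2), (fib i).card
          = ∑ i : Fin (n - 2), (((fib i).card - 1) + 1) := by
            exact Finset.sum_congr rfl (fun i _ => hrw i)
        _ = (∑ i : Fin (n - 2), ((fib i).card - 1)) + (n - 2) := by
            rw [Finset.sum_add_distrib]; simp
    omega
  set P : Finset (Fin (n - 2)) := univ.filter (fun i => 2 ≤ (fib i).card) with hP
  have hPcard : P.card ≤ 2 := by
    calc P.card = ∑ _i ∈ P, 1 := by simp
      _ ≤ ∑ i ∈ P, ((fib i).card - 1) := by
          refine Finset.sum_le_sum ?_
          intro i hi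
          have : 2 ≤ (fib i).card := (Finset.mem_filter.mp hi).2
          omega
      _ ≤ ∑ i : Fin (n - 2), ((fib i).card - 1) := by
          exact Finset.sum_le_sum_of_subset (Finset.subset_univ P)
      _ = 2 := hsum1
  set Q : Finset (Fin (n - 2)) := univ.filter (fun i => (fib i).card = 1) with hQ
  have hPQ : Q.card + P.card = n - 2 := by
    have hsplit := Finset.card_filter_add_card_filter_not
      (s := (univ : Finset (Fin (n-2)))) (p := fun i => (fib i).card = 1)
    have heq : univ.filter (fun i => ¬ (fib i).card = 1) = P := by
      apply Finset.filter_congr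
      intro i _
      have h1 := Finset.card_pos.mpr (hne i)
      constructor
      · intro hh; omega
      · intro hh; omega
    rw [heq] at hsplit
    simpa [Fintype.card_fin] using hsplit
  -- singleton fibers give pairwise adjacent set S
  set S : Finset V := univ.filter (fun v => (fib (c v)).card = 1) with hS
  have hfibsingle : ∀ v : V, (fib (c v)).card = 1 → fib (c v) = {v} := by
    intro v hv
    obtain ⟨w, hw⟩ := Finset.card_eq_one.mp hv
    have : v ∈ fib (c v) := (hmemfib v (c v)).mpr rfl
    rw [hw] at this ⊢
    simp at this
    rw [this]
  have hSclique : ∀ u ∈ S, ∀ v ∈ S, u ≠ v → G.Adj u v := by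
    intro u hu v hv huv
    have hu1 : (fib (c u)).card = 1 := (Finset.mem_filter.mp hu).2
    have hv1 : (fib (c v)).card = 1 := (Finset.mem_filter.mp hv).2
    have hcuv : c u ≠ c v := by
      intro hcc
      have : v ∈ fib (c u) := by rw [hcc]; exact (hmemfib v (c v)).mpr rfl
      rw [hfibsingle u hu1] at this
      simp at this
      exact huv this.symm
    by_contra hadj
    apply merge (c u) (c v) hcuv
    intro x y hx hy
    have hxu : x = u := by
      have : x ∈ fib (c u) := (hmemfib x (c u)).mpr hx
      rw [hfibsingle u hu1] at this; simpa using this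
    have hyv : y = v := by
      have : y ∈ fib (c v) := (hmemfib y (c v)).mpr hy
      rw [hfibsingle v hv1] at this; simpa using this
    rw [hxu, hyv]; exact hadj
  have hSQ : Q.card ≤ S.card := by
    refine Finset.card_le_card_of_injOn (fun i => (hne i).choose) ?_ ?_
    · intro i hi
      have hci : c ((hne i).choose) = i := (hmemfib _ i).mp (hne i).choose_spec
      have hi1 : (fib i).card = 1 := (Finset.mem_filter.mp hi).2
      rw [hS]
      simp only [Finset.mem_coe, Finset.mem_filter, Finset.mem_univ, true_and]
      rw [hci]; exact hi1
    · intro i _ j _ hij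
      have hij' : (hne i).choose = (hne j).choose := hij
      have hci : c ((hne i).choose) = i := (hmemfib _ i).mp (hne i).choose_spec
      have hcj : c ((hne j).choose) = j := (hmemfib _ j).mp (hne j).choose_spec
      rw [← hci, ← hcj, hij']
  rcases le_or_gt P.card 1 with hP1 | hP2
  case inl =>
    -- S itself is a clique of size ≥ n - 3
    have hcl : G.IsClique (S : Set V) := by
      intro u hu v hv huv
      exact hSclique u hu v hv huv
    have := SimpleGraph.IsClique.card_le_cliqueNum (tc := hcl)
    omega
  case inr =>
    -- P has exactly 2 elements, both fibers of size 2
    have hP2' : P.card = 2 := le_antisymm hPcard hP2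
    obtain ⟨p, q, hpq, hPeq⟩ := Finset.card_eq_two.mp hP2'
    have hpP : p ∈ P := by rw [hPeq]; simp
    have hqP : q ∈ P := by rw [hPeq]; simp
    have hp2 : 2 ≤ (fib p).card := (Finset.mem_filter.mp hpP).2
    have hq2 : 2 ≤ (fib q).card := (Finset.mem_filter.mp hqP).2
    have hfp2 : (fib p).card = 2 := by
      have hsub : ({p, q} : Finset (Fin (n-2))) ⊆ univ := Finset.subset_univ _
      have hle : ∑ i ∈ ({p, q} : Finset (Fin (n-2))), ((fib i).card - 1)
          ≤ ∑ i : Fin (n - 2), ((fib i).card - 1) :=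
        Finset.sum_le_sum_of_subset hsub
      rw [Finset.sum_pair hpq, hsum1] at hle
      omega
    obtain ⟨a1, a2, ha12, hfpeq⟩ := Finset.card_eq_two.mp hfp2
    have hca1 : c a1 = p := by
      have : a1 ∈ fib p := by rw [hfpeq]; simp
      exact (hmemfib a1 p).mp this
    have hca2 : c a2 = p := by
      have : a2 ∈ fib p := by rw [hfpeq]; simp
      exact (hmemfib a2 p).mp this
    have hcvp : ∀ v : V, c v = p → v = a1 ∨ v = a2 := by
      intro v hv
      have : v ∈ fib p := (hmemfib v p).mpr hv
      rw [hfpeq] at this; simpa using this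
    have hSp : ∀ s ∈ S, c s ≠ p := by
      intro s hs hsp
      have h1 : (fib (c s)).card = 1 := (Finset.mem_filter.mp hs).2
      rw [hsp, hfp2] at h1; omega
    -- key claim
    have hkey : (∀ s ∈ S, G.Adj a1 s) ∨ (∀ s ∈ S, G.Adj a2 s) := by
      by_contra hcon
      push_neg at hcon
      obtain ⟨⟨s1, hs1S, hs1⟩, ⟨s2, hs2S, hs2⟩⟩ := hcon
      by_cases hss : s1 = s2
      · -- s1 = s2 nonadjacent to both a1 a2: merge color of s1 with p
        subst hss
        apply merge (c s1) p (hSp s1 hs1S)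
        intro x y hx hy
        have hxs : x = s1 := by
          have h1 : (fib (c s1)).card = 1 := (Finset.mem_filter.mp hs1S).2
          have : x ∈ fib (c s1) := (hmemfib x (c s1)).mpr hx
          rw [hfibsingle s1 h1] at this; simpa using this
        rcases hcvp y hy with hy1 | hy1 <;> subst hxs <;> subst hy1
        · intro hadj; exact hs1 hadj.symm
        · intro hadj; exact hs2 hadj.symm
      · -- s1 ≠ s2 : recolor a1 ↦ c s1, a2 ↦ c s2
        apply hnc'
        refine aux_reduce G
          (fun v => if v = a1 then c s1 else if v = a2 then c s2 else c v) ?_ p ?_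
        · intro u v hadj
          have hcs12 : c s1 ≠ c s2 := by
            intro hcc
            have h1 : (fib (c s1)).card = 1 := (Finset.mem_filter.mp hs1S).2
            have : s2 ∈ fib (c s1) := by rw [hcc]; exact (hmemfib s2 (c s2)).mpr rfl
            rw [hfibsingle s1 h1] at this
            simp at this
            exact hss this.symm
          have hfs1 : ∀ w : V, c w = c s1 → w = s1 := by
            intro w hw
            have h1 : (fib (c s1)).card = 1 := (Finset.mem_filter.mp hs1S).2
            have : w ∈ fib (c s1) := (hmemfib w (c s1)).mpr hw
            rw [hfibsingle s1 h1] at this; simpa using this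
          have hfs2 : ∀ w : V, c w = c s2 → w = s2 := by
            intro w hw
            have h1 : (fib (c s2)).card = 1 := (Finset.mem_filter.mp hs2S).2
            have : w ∈ fib (c s2) := (hmemfib w (c s2)).mpr hw
            rw [hfibsingle s2 h1] at this; simpa using this
          have hcuv : c u ≠ c v := c.valid hadj
          rcases eq_or_ne u a1 with h1 | h1
          · rcases eq_or_ne v a1 with h2 | h2
            · exact absurd (h1.trans h2.symm) (G.ne_of_adj hadj)
            · rcases eq_or_ne v a2 with h3 | h3
              · simp only [if_pos h1, if_neg h2, if_pos h3]
                exact hcs12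
              · simp only [if_pos h1, if_neg h2, if_neg h3]
                intro heq
                apply hs1
                rw [← hfs1 v heq.symm, ← h1]
                exact hadj
          · rcases eq_or_ne u a2 with h1' | h1'
            · rcases eq_or_ne v a1 with h2 | h2
              · simp only [if_neg h1, if_pos h1', if_pos h2]
                exact hcs12.symm
              · rcases eq_or_ne v a2 with h3 | h3
                · exact absurd (h1'.trans h3.symm) (G.ne_of_adj hadj)
                · simp only [if_neg h1, if_pos h1', if_neg h2, if_neg h3]
                  intro heq
                  apply hs2
                  rw [← hfs2 v heq.symm, ← h1']
                  exact hadj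
            · rcases eq_or_ne v a1 with h2 | h2
              · simp only [if_neg h1, if_neg h1', if_pos h2]
                intro heq
                apply hs1
                rw [← hfs1 u heq, ← h2]
                exact hadj.symm
              · rcases eq_or_ne v a2 with h3 | h3
                · simp only [if_neg h1, if_neg h1', if_neg h2, if_pos h3]
                  intro heq
                  apply hs2
                  rw [← hfs2 u heq, ← h3]
                  exact hadj.symm
                · simp only [if_neg h1, if_neg h1', if_neg h2, if_neg h3]
                  exact hcuv
        · intro v
          by_cases hv1 : v = a1
          · simp only [if_pos hv1]
            exact hSp s1 hs1S
          · by_cases hv2 : v = a2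
            · simp only [if_neg hv1, if_pos hv2]
              exact hSp s2 hs2S
            · simp only [if_neg hv1, if_neg hv2]
              intro hcv
              rcases hcvp v hcv with h' | h' <;> [exact hv1 h'; exact hv2 h']
    -- build the clique
    have hfinal : ∀ a : V, c a = p → (∀ s ∈ S, G.Adj a s) → n - 3 ≤ G.cliqueNum := by
      intro a hap hadj
      have haS : a ∉ S := by
        intro haS
        exact hSp a haS hap
      have hcl : G.IsClique ((insert a S : Finset V) : Set V) := by
        rw [Finset.coe_insert]
        refine SimpleGraph.IsClique.insert ?_ ?_
        · intro u hu v hv huv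
          exact hSclique u hu v hv huv
        · intro b hb hba
          exact hadj b hb
      have hcard : (insert a S).card = S.card + 1 := Finset.card_insert_of_notMem haS
      have := SimpleGraph.IsClique.card_le_cliqueNum (tc := hcl)
      omega
    rcases hkey with hk | hk
    · exact hfinal a1 hca1 hk
    · exact hfinal a2 hca2 hk
end

section
/- Let k ≥ 3 and let G be a graph on n vertices with χ(G) = n - k, where n ≥ 3k + 1. Then ω(G) ≥ n - 2k + 2. -/
open Finset


private lemma aux_missing {V : Type*} [Fintype V] {G : SimpleGraph V} {m : ℕ} (hm : 1 ≤ m)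
    (hχ : G.chromaticNumber = (m : ℕ∞)) (D : V → Fin m)
    (hD : ∀ ⦃x y⦄, G.Adj x y → D x ≠ D y) (j : Fin m) (hj : ∀ x, D x ≠ j) : False := by
  classical
  have C : G.Coloring {x : Fin m // x ≠ j} :=
    SimpleGraph.Coloring.mk (fun v => ⟨D v, hj v⟩) (by
      intro v w hvw hc
      exact hD hvw (congrArg Subtype.val hc))
  have hcard : Fintype.card {x : Fin m // x ≠ j} = m - 1 := by
    simp [Fintype.card_subtype_compl]
  have hcol : G.Colorable (m - 1) := hcard ▸ C.colorable
  have := hcol.chromaticNumber_le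
  rw [hχ] at this
  have : m ≤ m - 1 := by exact_mod_cast this
  omega

/-- In a proper coloring realizing the chromatic number, two distinct vertices whose color
classes are singletons must be adjacent. -/
private lemma aux_single_adj {V : Type*} [Fintype V] {G : SimpleGraph V} {m : ℕ} (hm : 1 ≤ m)
    (hχ : G.chromaticNumber = (m : ℕ∞)) (D : V → Fin m)
    (hD : ∀ ⦃x y⦄, G.Adj x y → D x ≠ D y) (u v : V) (huv : u ≠ v)
    (hu : ∀ w, D w = D u → w = u) (hv : ∀ w, D w = D v → w = v) : G.Adj u v := by
  classical
  by_contra hadj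
  have hDuv : D u ≠ D v := fun e => huv (hv u e)
  refine aux_missing hm hχ (fun x => if D x = D v then D u else D x) ?_ (D v) ?_
  · intro x y hxy heq
    split_ifs at heq with h1 h2 h2
    · exact (G.ne_of_adj hxy) ((hv x h1).trans (hv y h2).symm)
    · have hx : x = v := hv x h1
      have hy : y = u := hu y heq.symm
      exact hadj (by rwa [hx, hy, G.adj_comm] at hxy)
    · have hy : y = v := hv y h2
      have hx : x = u := hu x heq
      exact hadj (by rwa [hx, hy] at hxy)
    · exact hD hxy heq
  · intro x
    split_ifs with h1
    · exact hDuv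
    · exact h1

/-- Every color class of size two contains a vertex adjacent to all singleton-class vertices. -/
private lemma aux_pair {V : Type*} [Fintype V] [DecidableEq V] {G : SimpleGraph V} {m : ℕ}
    (hm : 1 ≤ m)
    (hχ : G.chromaticNumber = (m : ℕ∞)) (cf : V → Fin m)
    (hcf : ∀ ⦃x y⦄, G.Adj x y → cf x ≠ cf y) (a b : V) (hab : a ≠ b)
    (hfib : ∀ w, cf w = cf a → w = a ∨ w = b) (hba : cf b = cf a) (S : Finset V)
    (hS : ∀ s ∈ S, ∀ w, cf w = cf s → w = s) :
    ∃ x, (x = a ∨ x = b) ∧ ∀ s ∈ S, G.Adj x s := by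
  have haS : a ∉ S := fun haS => hab.symm (hS a haS b hba)
  have hbS : b ∉ S := fun hbS => hab (hS b hbS a hba.symm)
  by_cases ha : ∀ s ∈ S, G.Adj a s
  · exact ⟨a, Or.inl rfl, ha⟩
  push_neg at ha
  obtain ⟨s₁, hs₁S, hnas₁⟩ := ha
  have hs₁a : s₁ ≠ a := fun e => haS (e ▸ hs₁S)
  have hs₁b : s₁ ≠ b := fun e => hbS (e ▸ hs₁S)
  have hcfs₁a : cf s₁ ≠ cf a := fun e => hs₁a.symm (hS s₁ hs₁S a e.symm) |>.elim
  by_cases hb1 : G.Adj b s₁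
  · refine ⟨b, Or.inr rfl, ?_⟩
    intro s hsS
    by_cases hss : s = s₁
    · rwa [hss]
    have hsb : s ≠ b := fun e => hbS (e ▸ hsS)
    have hsa : s ≠ a := fun e => haS (e ▸ hsS)
    set D : V → Fin m := fun x => if x = s₁ then cf a else if x = b then cf s₁ else cf x
      with hDdef
    have hDb : D b = cf s₁ := by simp [hDdef, hs₁b.symm, Ne.symm hs₁b]
    have hDs : D s = cf s := by simp [hDdef, hss, hsb]
    have hD : ∀ ⦃x y⦄, G.Adj x y → D x ≠ D y := by
      intro x y hxy heq
      simp only [hDdef] at heq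
      split_ifs at heq with h1 h2 h3 h4 h5 h6 h7 h8
      · exact G.ne_of_adj hxy (h1.trans h2.symm)
      · exact hcfs₁a heq.symm
      · rcases hfib y heq.symm with rfl | rfl
        · rw [h1] at hxy; exact hnas₁ hxy.symm
        · exact h3 rfl
      · exact hcfs₁a heq
      · exact G.ne_of_adj hxy (h4.trans h6.symm)
      · exact h5 (hS s₁ hs₁S y heq.symm)
      · rcases hfib x heq with rfl | rfl
        · rw [h7] at hxy; exact hnas₁ hxy
        · exact h4 rfl
      · exact h1 (hS s₁ hs₁S x heq)
      · exact hcf hxy heq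
    refine aux_single_adj hm hχ D hD b s (hsb.symm) ?_ ?_
    · intro w hw
      rw [hDb] at hw
      by_cases hw1 : w = s₁
      · rw [hw1] at hw; simp [hDdef] at hw
        exact absurd hw.symm hcfs₁a
      by_cases hw2 : w = b
      · exact hw2
      · simp [hDdef, hw1, hw2] at hw
        exact absurd (hS s₁ hs₁S w hw) hw1
    · intro w hw
      rw [hDs] at hw
      by_cases hw1 : w = s₁
      · rw [hw1] at hw; simp [hDdef] at hw
        exact absurd ((hS s hsS a hw).symm) hsa
      by_cases hw2 : w = b
      · rw [hw2, hDb] at hw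
        exact absurd (hS s hsS s₁ hw) (fun e => hss e.symm)
      · simp [hDdef, hw1, hw2] at hw
        exact hS s hsS w hw
  · exfalso
    refine aux_missing hm hχ (fun x => if x = s₁ then cf a else cf x) ?_ (cf s₁) ?_
    · intro x y hxy heq
      split_ifs at heq with h1 h2 h3
      · exact G.ne_of_adj hxy (h1.trans h2.symm)
      · rcases hfib y heq.symm with rfl | rfl
        · rw [h1] at hxy; exact hnas₁ hxy.symm
        · rw [h1] at hxy; exact hb1 hxy.symm
      · rcases hfib x heq with rfl | rfl
        · rw [h3] at hxy; exact hnas₁ hxy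
        · rw [h3] at hxy; exact hb1 hxy
      · exact hcf hxy heq
    · intro x
      split_ifs with h1
      · exact hcfs₁a.symm
      · exact fun e => h1 (hS s₁ hs₁S x e)

theorem stmt_5 {V : Type*} [Fintype V] (G : SimpleGraph V) (n k : ℕ) (hk : 3 ≤ k)
    (hn : Fintype.card V = n) (hnk : 3 * k + 1 ≤ n)
    (h : G.chromaticNumber = ((n - k : ℕ) : ℕ∞)) :
    n - 2 * k + 2 ≤ G.cliqueNum := by
  classical
  set m : ℕ := n - k with hmdef
  have hm1 : 1 ≤ m := by omega
  have hcol : G.Colorable m := SimpleGraph.chromaticNumber_le_iff_colorable.mp (le_of_eq h)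
  obtain ⟨C⟩ := hcol
  set cf : V → Fin m := fun v => C v with hcfdef
  have hcf : ∀ ⦃x y⦄, G.Adj x y → cf x ≠ cf y := fun x y hxy => C.valid hxy
  set fib : Fin m → Finset V := fun i => univ.filter (fun v => cf v = i) with hfibdef
  have hmemfib : ∀ (v : V) (i : Fin m), v ∈ fib i ↔ cf v = i := by
    intro v i; simp [hfibdef]
  have htot : ∑ i : Fin m, (fib i).card = n := by
    rw [← hn, ← Finset.card_univ,
      Finset.card_eq_sum_card_fiberwise (f := cf) (t := univ) (fun x _ => mem_univ _)]
  have hfne : ∀ i : Fin m, 1 ≤ (fib i).card := by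
    intro i
    by_contra hcon
    have hempty : ∀ v, cf v ≠ i := by
      intro v hv
      have : v ∈ fib i := (hmemfib v i).mpr hv
      have := Finset.card_pos.mpr ⟨v, this⟩
      omega
    exact aux_missing hm1 h cf hcf i hempty
  set M : Finset (Fin m) := univ.filter (fun i => 2 ≤ (fib i).card) with hMdef
  set t : ℕ := M.card with htdef
  have hsumM : ∑ i ∈ M, ((fib i).card - 1) = k := by
    have h1 : ∑ i : Fin m, ((fib i).card - 1) + m = n := by
      have : ∑ i : Fin m, ((fib i).card - 1) + ∑ _i : Fin m, 1 = ∑ i : Fin m, (fib i).card := by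
        rw [← Finset.sum_add_distrib]
        exact Finset.sum_congr rfl (fun i _ => by have := hfne i; omega)
      simpa [htot] using this
    have h2 : ∑ i : Fin m, ((fib i).card - 1) = ∑ i ∈ M, ((fib i).card - 1) := by
      refine (Finset.sum_subset (Finset.subset_univ M) ?_).symm
      intro i _ hiM
      have : ¬ (2 ≤ (fib i).card) := by simpa [hMdef] using hiM
      omega
    omega
  have htk : t ≤ k := by
    calc t = ∑ _i ∈ M, 1 := by simp [htdef]
    _ ≤ ∑ i ∈ M, ((fib i).card - 1) := by
        refine Finset.sum_le_sum ?_
        intro i hiM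
        have : 2 ≤ (fib i).card := by simpa [hMdef] using hiM
        omega
    _ = k := hsumM
  set S : Finset V := univ.filter (fun v => ∀ w, cf w = cf v → w = v) with hSdef
  have hS : ∀ s ∈ S, ∀ w, cf w = cf s → w = s := by
    intro s hs; simpa [hSdef] using hs
  have hsub : ∀ v : V, (∀ w, cf w = cf v → w = v) → (fib (cf v)).card ≤ 1 := by
    intro v hv
    have : fib (cf v) ⊆ {v} := by
      intro w hw
      simp [hv w ((hmemfib w _).mp hw)]
    simpa using Finset.card_le_card this
  have hSiff : ∀ v : V, v ∈ S ↔ ¬ (2 ≤ (fib (cf v)).card) := by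
    intro v
    constructor
    · intro hv
      have := hsub v (hS v hv)
      omega
    · intro hv
      rw [hSdef]
      simp only [mem_filter, mem_univ, true_and]
      intro w hw
      have h1 : w ∈ fib (cf v) := (hmemfib w _).mpr hw
      have h2 : v ∈ fib (cf v) := (hmemfib v _).mpr rfl
      exact Finset.card_le_one.mp (by omega) w h1 v h2
  have hMnotS : ∀ v : V, cf v ∈ M → v ∉ S := by
    intro v hv hvS
    have : 2 ≤ (fib (cf v)).card := by simpa [hMdef] using hv
    exact (hSiff v).mp hvS this
  have hScolor : ∀ s ∈ S, ∀ i ∈ M, cf s ≠ i := by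
    intro s hsS i hiM he
    exact hMnotS s (he ▸ hiM) hsS
  -- cardinality of S
  have hScard : S.card = n - (k + t) := by
    set multiV : Finset V := univ.filter (fun v => 2 ≤ (fib (cf v)).card) with hmv
    have hSeq : S = univ \ multiV := by
      ext v
      simp only [hmv, Finset.mem_sdiff, mem_univ, true_and, mem_filter]
      rw [hSiff v]
    have hmvcard : multiV.card = k + t := by
      have h1 : multiV.card = ∑ i ∈ M, (multiV.filter (fun v => cf v = i)).card := by
        refine Finset.card_eq_sum_card_fiberwise ?_
        intro v hv
        simp only [hmv, Finset.mem_coe, mem_filter, mem_univ, true_and] at hv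
        simp [hMdef, hv]
      have h2 : ∀ i ∈ M, (multiV.filter (fun v => cf v = i)).card = (fib i).card := by
        intro i hiM
        congr 1
        ext v
        simp only [hmv, mem_filter, mem_univ, true_and, hmemfib]
        constructor
        · tauto
        · intro hv
          refine ⟨?_, hv⟩
          rw [hv]
          simpa [hMdef] using hiM
      have h3 : ∑ i ∈ M, (fib i).card = k + t := by
        have : ∑ i ∈ M, (fib i).card = ∑ i ∈ M, ((fib i).card - 1) + ∑ _i ∈ M, 1 := by
          rw [← Finset.sum_add_distrib]
          refine Finset.sum_congr rfl (fun i hiM => ?_)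
          have : 2 ≤ (fib i).card := by simpa [hMdef] using hiM
          omega
        simp only [this, hsumM]
        simp [htdef]
      rw [h1, Finset.sum_congr rfl h2, h3]
    rw [hSeq, Finset.card_sdiff_of_subset (Finset.subset_univ _), Finset.card_univ, hn, hmvcard]
  have hSclique : G.IsClique (S : Set V) := by
    intro u hu v hv huv
    exact aux_single_adj hm1 h cf hcf u v huv (hS u hu) (hS v hv)
  -- case distinction on t
  by_cases ht2 : t ≤ k - 2
  · have hcard : n - 2 * k + 2 ≤ S.card := by omega
    calc n - 2*k + 2 ≤ S.card := hcard
    _ ≤ G.cliqueNum := SimpleGraph.IsClique.card_le_cliqueNum (tc := hSclique)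
  by_cases ht1 : t = k - 1
  · -- there is a color class of size exactly 2
    have hpair : ∃ i ∈ M, (fib i).card = 2 := by
      by_contra hcon
      push_neg at hcon
      have h3 : ∀ i ∈ M, 2 ≤ (fib i).card - 1 := by
        intro i hiM
        have h2 : 2 ≤ (fib i).card := by simpa [hMdef] using hiM
        have := hcon i hiM
        omega
      have : 2 * t ≤ ∑ i ∈ M, ((fib i).card - 1) := by
        calc 2 * t = ∑ _i ∈ M, 2 := by simp [htdef, mul_comm]
        _ ≤ _ := Finset.sum_le_sum h3
      omega
    obtain ⟨i, hiM, hicard⟩ := hpair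
    obtain ⟨a, b, hab, hfib2⟩ := Finset.card_eq_two.mp hicard
    have hamem : cf a = i := (hmemfib a i).mp (by rw [hfib2]; simp)
    have hbmem : cf b = i := (hmemfib b i).mp (by rw [hfib2]; simp)
    have hfibw : ∀ w, cf w = cf a → w = a ∨ w = b := by
      intro w hw
      have : w ∈ fib i := (hmemfib w i).mpr (hw.trans hamem)
      rw [hfib2] at this
      simpa using this
    obtain ⟨x, hxab, hxgood⟩ :=
      aux_pair hm1 h cf hcf a b hab hfibw (hbmem.trans hamem.symm) S hS
    have hxi : cf x = i := by rcases hxab with rfl | rfl <;> assumption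
    have hxS : x ∉ S := hMnotS x (hxi ▸ hiM)
    have hclique : G.IsClique (insert x (S : Set V)) :=
      hSclique.insert (fun b hb hbx => hxgood b hb)
    have hcard : (insert x S).card = S.card + 1 := Finset.card_insert_of_notMem hxS
    have : (insert x S).card ≤ G.cliqueNum := by
      refine SimpleGraph.IsClique.card_le_cliqueNum (tc := ?_)
      rwa [Finset.coe_insert]
    omega
  · -- t = k
    have htk' : t = k := by omega
    have hall2 : ∀ i ∈ M, (fib i).card = 2 := by
      intro i hiM
      by_contra hi2
      have hi2' : 2 ≤ (fib i).card := by simpa [hMdef] using hiM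
      have hi3 : 3 ≤ (fib i).card := by omega
      have he1 : ((fib i).card - 1) + ∑ x ∈ M.erase i, ((fib x).card - 1)
          = ∑ x ∈ M, ((fib x).card - 1) := Finset.add_sum_erase M (fun x => (fib x).card - 1) hiM
      have he2 : (M.erase i).card ≤ ∑ x ∈ M.erase i, ((fib x).card - 1) := by
        rw [Finset.card_eq_sum_ones]
        refine Finset.sum_le_sum ?_
        intro x hx
        have : 2 ≤ (fib x).card := by simpa [hMdef] using (Finset.erase_subset i M hx)
        omega
      have he3 : (M.erase i).card = t - 1 := by rw [Finset.card_erase_of_mem hiM]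
      omega
    have hVne : Nonempty V := by
      rw [← Fintype.card_pos_iff, hn]; omega
    have hchoice : ∀ i : Fin m, ∃ a b : V, i ∈ M →
        (a ≠ b ∧ cf a = i ∧ cf b = i ∧ (∀ w, cf w = i → w = a ∨ w = b) ∧
          ∀ s ∈ S, G.Adj a s) := by
      intro i
      by_cases hiM : i ∈ M
      · obtain ⟨a, b, hab, hfib2⟩ := Finset.card_eq_two.mp (hall2 i hiM)
        have hamem : cf a = i := (hmemfib a i).mp (by rw [hfib2]; simp)
        have hbmem : cf b = i := (hmemfib b i).mp (by rw [hfib2]; simp)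
        have hfibw : ∀ w, cf w = i → w = a ∨ w = b := by
          intro w hw
          have : w ∈ fib i := (hmemfib w i).mpr hw
          rw [hfib2] at this
          simpa using this
        obtain ⟨x, hxab, hxgood⟩ := aux_pair hm1 h cf hcf a b hab
          (fun w hw => hfibw w (hw.trans hamem)) (hbmem.trans hamem.symm) S hS
        rcases hxab with rfl | rfl
        · exact ⟨x, b, fun _ => ⟨hab, hamem, hbmem, hfibw, hxgood⟩⟩
        · exact ⟨x, a, fun _ => ⟨hab.symm, hbmem, hamem,
            fun w hw => (hfibw w hw).symm, hxgood⟩⟩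
      · exact ⟨Classical.arbitrary V, Classical.arbitrary V, fun hc => absurd hc hiM⟩
    choose A B hprop using hchoice
    have hABne : ∀ i ∈ M, A i ≠ B i := fun i hi => (hprop i hi).1
    have hcfA : ∀ i ∈ M, cf (A i) = i := fun i hi => (hprop i hi).2.1
    have hcfB : ∀ i ∈ M, cf (B i) = i := fun i hi => (hprop i hi).2.2.1
    have hfibi : ∀ i ∈ M, ∀ w, cf w = i → w = A i ∨ w = B i :=
      fun i hi => (hprop i hi).2.2.2.1
    have hAgood : ∀ i ∈ M, ∀ s ∈ S, G.Adj (A i) s := fun i hi => (hprop i hi).2.2.2.2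
    by_cases hcross : ∃ u v : V, (∀ s ∈ S, G.Adj u s) ∧ (∀ s ∈ S, G.Adj v s) ∧
        cf u ∈ M ∧ cf v ∈ M ∧ cf u ≠ cf v ∧ G.Adj u v
    · obtain ⟨u, v, hgu, hgv, huM, hvM, hcuv, hadj⟩ := hcross
      have huv : u ≠ v := fun e => hcuv (by rw [e])
      have huS : u ∉ S := hMnotS u huM
      have hvS : v ∉ S := hMnotS v hvM
      have hclique : G.IsClique (insert u (insert v (S : Set V))) := by
        refine (hSclique.insert (fun b hb _ => hgv b hb)).insert ?_
        intro b hb hbu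
        rcases Set.mem_insert_iff.mp hb with rfl | hbS
        · exact hadj
        · exact hgu b hbS
      have hcard2 : (insert u (insert v S)).card = S.card + 2 := by
        rw [Finset.card_insert_of_notMem (by simp [huv, huS]),
          Finset.card_insert_of_notMem hvS]
      have hle : (insert u (insert v S)).card ≤ G.cliqueNum := by
        refine SimpleGraph.IsClique.card_le_cliqueNum (tc := ?_)
        rwa [Finset.coe_insert, Finset.coe_insert]
      omega
    push_neg at hcross
    by_cases hfull2 : ∃ i ∈ M, ∃ j ∈ M, i ≠ j ∧ (∀ s ∈ S, G.Adj (B i) s) ∧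
        (∀ s ∈ S, G.Adj (B j) s)
    · exfalso
      obtain ⟨i, hiM, j, hjM, hij, hgBi, hgBj⟩ := hfull2
      refine aux_missing hm1 h (fun x => if cf x = j then i else cf x) ?_ j ?_
      · intro x y hxy heq
        split_ifs at heq with h1 h2 h3
        · exact hcf hxy (h1.trans h2.symm)
        · have hgx : ∀ s ∈ S, G.Adj x s := by
            rcases hfibi j hjM x h1 with rfl | rfl
            · exact hAgood j hjM
            · exact hgBj
          have hgy : ∀ s ∈ S, G.Adj y s := by
            rcases hfibi i hiM y heq.symm with rfl | rfl
            · exact hAgood i hiM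
            · exact hgBi
          exact hcross x y hgx hgy (by rw [h1]; exact hjM)
            (by rw [heq.symm]; exact hiM) (by rw [h1, heq.symm]; exact hij.symm) hxy
        · have hgx : ∀ s ∈ S, G.Adj x s := by
            rcases hfibi i hiM x heq with rfl | rfl
            · exact hAgood i hiM
            · exact hgBi
          have hgy : ∀ s ∈ S, G.Adj y s := by
            rcases hfibi j hjM y h3 with rfl | rfl
            · exact hAgood j hjM
            · exact hgBj
          exact hcross x y hgx hgy (by rw [heq]; exact hiM)
            (by rw [h3]; exact hjM) (by rw [heq, h3]; exact hij) hxy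
        · exact hcf hxy heq
      · intro x
        split_ifs with h1
        · exact hij
        · exact h1
    by_cases hfull1 : ∃ i ∈ M, ∀ s ∈ S, G.Adj (B i) s
    · exfalso
      obtain ⟨i, hiM, hgBi⟩ := hfull1
      obtain ⟨j, hjM, hji⟩ := Finset.exists_mem_ne (by omega : 1 < M.card) i
      have hBj : ¬ ∀ s ∈ S, G.Adj (B j) s := by
        intro hgBj
        exact hfull2 ⟨i, hiM, j, hjM, Ne.symm hji, hgBi, hgBj⟩
      push_neg at hBj
      obtain ⟨c, hcS, hnBjc⟩ := hBj
      refine aux_missing hm1 h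
        (fun x => if cf x = i then j else if x = B j then cf c else cf x) ?_ i ?_
      · intro x y hxy hq
        split_ifs at hq with h1 h2 h3 h4 h5 h6 h7 h8
        · exact hcf hxy (h1.trans h2.symm)
        · exact hScolor c hcS j hjM hq.symm
        · have hgx : ∀ s ∈ S, G.Adj x s := by
            rcases hfibi i hiM x h1 with rfl | rfl
            · exact hAgood i hiM
            · exact hgBi
          have hgy : ∀ s ∈ S, G.Adj y s := by
            rcases hfibi j hjM y hq.symm with rfl | rfl
            · exact hAgood j hjM
            · exact absurd rfl h3
          exact hcross x y hgx hgy (by rw [h1]; exact hiM)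
            (by rw [← hq]; exact hjM) (by rw [h1, ← hq]; exact Ne.symm hji) hxy
        · exact hScolor c hcS j hjM hq
        · exact G.ne_of_adj hxy (h4.trans h6.symm)
        · have hyc : y = c := hS c hcS y hq.symm
          rw [h4, hyc] at hxy
          exact hnBjc hxy
        · have hgx : ∀ s ∈ S, G.Adj x s := by
            rcases hfibi j hjM x hq with rfl | rfl
            · exact hAgood j hjM
            · exact absurd rfl h4
          have hgy : ∀ s ∈ S, G.Adj y s := by
            rcases hfibi i hiM y h7 with rfl | rfl
            · exact hAgood i hiM
            · exact hgBi
          exact hcross x y hgx hgy (by rw [hq]; exact hjM)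
            (by rw [h7]; exact hiM) (by rw [hq, h7]; exact hji) hxy
        · have hxc : x = c := hS c hcS x hq
          rw [h8, hxc] at hxy
          exact hnBjc hxy.symm
        · exact hcf hxy hq
      · intro x
        split_ifs with h1 h2
        · exact hji
        · exact hScolor c hcS i hiM
        · exact h1
    push_neg at hfull1
    have hBnot : ∀ i ∈ M, ∃ c ∈ S, ¬ G.Adj (B i) c := by
      intro i hiM
      have := hfull1 i hiM
      exact this
    by_cases hdist : ∃ i ∈ M, ∃ j ∈ M, i ≠ j ∧ ∃ ci ∈ S, ∃ cj ∈ S, ci ≠ cj ∧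
        ¬G.Adj (B i) ci ∧ ¬G.Adj (B j) cj
    · exfalso
      obtain ⟨i, hiM, j, hjM, hij, ci, hciS, cj, hcjS, hcicj, hnbi, hnbj⟩ := hdist
      have hciAj : ci ≠ A j := fun e => hScolor ci hciS j hjM (by rw [e]; exact hcfA j hjM)
      have hcjAj : cj ≠ A j := fun e => hScolor cj hcjS j hjM (by rw [e]; exact hcfA j hjM)
      have hciBi : ci ≠ B i := fun e => hScolor ci hciS i hiM (by rw [e]; exact hcfB i hiM)
      have hcjBj : cj ≠ B j := fun e => hScolor cj hcjS j hjM (by rw [e]; exact hcfB j hjM)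
      refine aux_missing hm1 h (fun x => if x = A j then i else if x = B i then cf ci
        else if x = B j then cf cj else cf x) ?_ j ?_
      · intro x y hxy hq
        split_ifs at hq with h1 h2 h3 h4 h5 h6 h7 h8 h9 h10 h11 h12 h13 h14 h15
        · exact G.ne_of_adj hxy (h1.trans h2.symm)
        · exact hScolor ci hciS i hiM hq.symm
        · exact hScolor cj hcjS i hiM hq.symm
        · have hgy : ∀ s ∈ S, G.Adj y s := by
            rcases hfibi i hiM y hq.symm with rfl | rfl
            · exact hAgood i hiM
            · exact absurd rfl h3
          have hgx : ∀ s ∈ S, G.Adj x s := by rw [h1]; exact hAgood j hjM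
          exact hcross x y hgx hgy (by rw [h1, hcfA j hjM]; exact hjM)
            (by rw [← hq]; exact hiM) (by rw [h1, hcfA j hjM, ← hq]; exact hij.symm) hxy
        · exact hScolor ci hciS i hiM hq
        · exact G.ne_of_adj hxy (h5.trans h7.symm)
        · exact hcicj (hS cj hcjS ci hq)
        · have hyc : y = ci := hS ci hciS y hq.symm
          rw [h5, hyc] at hxy
          exact hnbi hxy
        · exact hScolor cj hcjS i hiM hq
        · exact hcicj (hS ci hciS cj hq).symm
        · exact G.ne_of_adj hxy (h9.trans h12.symm)
        · have hyc : y = cj := hS cj hcjS y hq.symm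
          rw [h9, hyc] at hxy
          exact hnbj hxy
        · have hgx : ∀ s ∈ S, G.Adj x s := by
            rcases hfibi i hiM x hq with rfl | rfl
            · exact hAgood i hiM
            · exact absurd rfl h5
          have hgy : ∀ s ∈ S, G.Adj y s := by rw [h13]; exact hAgood j hjM
          exact hcross x y hgx hgy (by rw [hq]; exact hiM)
            (by rw [h13, hcfA j hjM]; exact hjM) (by rw [hq, h13, hcfA j hjM]; exact hij) hxy
        · have hxc : x = ci := hS ci hciS x hq
          rw [h14, hxc] at hxy
          exact hnbi hxy.symm
        · have hxc : x = cj := hS cj hcjS x hq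
          rw [h15, hxc] at hxy
          exact hnbj hxy.symm
        · exact hcf hxy hq
      · intro x
        split_ifs with h1 h2 h3
        · exact hij
        · exact hScolor ci hciS j hjM
        · exact hScolor cj hcjS j hjM
        · intro he
          rcases hfibi j hjM x he with rfl | rfl
          · exact h1 rfl
          · exact h3 rfl
    push_neg at hdist
    obtain ⟨i₀, hi₀⟩ := Finset.card_pos.mp (show 0 < M.card by omega)
    obtain ⟨c, hcS, hnc⟩ := hBnot i₀ hi₀
    have hcommon : ∀ i ∈ M, ∀ s ∈ S, ¬G.Adj (B i) s → s = c := by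
      intro i hiM s hsS hns
      by_contra hsc
      by_cases hii : i = i₀
      · subst hii
        obtain ⟨j, hjM, hji⟩ := Finset.exists_mem_ne (by omega : 1 < M.card) i
        obtain ⟨cj, hcjS, hncj⟩ := hBnot j hjM
        have hcjc : cj = c := by
          by_contra hne
          exact hnc (hdist j hjM i hiM hji cj hcjS c hcS hne hncj)
        subst hcjc
        exact hncj (hdist i hiM j hjM (Ne.symm hji) s hsS cj hcjS hsc hns)
      · exact hnc (hdist i hiM i₀ hi₀ hii s hsS c hcS hsc hns)
    have hBc : ∀ i ∈ M, ¬ G.Adj (B i) c := by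
      intro i hiM
      obtain ⟨s, hsS, hns⟩ := hBnot i hiM
      rwa [hcommon i hiM s hsS hns] at hns
    have hBadj : ∀ i ∈ M, ∀ s ∈ S, s ≠ c → G.Adj (B i) s := by
      intro i hiM s hsS hsc
      by_contra hnn
      exact hsc (hcommon i hiM s hsS hnn)
    have hBB : ∀ i ∈ M, ∀ j ∈ M, i ≠ j → G.Adj (B i) (B j) := by
      intro i hiM j hjM hij
      by_contra hnadj
      refine aux_missing hm1 h (fun x => if x = A j then i
        else if x = B i ∨ x = B j then cf c else cf x) ?_ j ?_
      · intro x y hxy hq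
        split_ifs at hq with h1 h2 h3 h4 h5 h6 h7 h8
        · exact G.ne_of_adj hxy (h1.trans h2.symm)
        · exact hScolor c hcS i hiM hq.symm
        · have hgy : ∀ s ∈ S, G.Adj y s := by
            rcases hfibi i hiM y hq.symm with rfl | rfl
            · exact hAgood i hiM
            · exact absurd (Or.inl rfl) h3
          have hgx : ∀ s ∈ S, G.Adj x s := by rw [h1]; exact hAgood j hjM
          exact hcross x y hgx hgy (by rw [h1, hcfA j hjM]; exact hjM)
            (by rw [← hq]; exact hiM) (by rw [h1, hcfA j hjM, ← hq]; exact hij.symm) hxy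
        · exact hScolor c hcS i hiM hq
        · rcases h4 with rfl | rfl <;> rcases h6 with rfl | rfl
          · exact G.loopless.irrefl _ hxy
          · exact hnadj hxy
          · exact hnadj hxy.symm
          · exact G.loopless.irrefl _ hxy
        · have hyc : y = c := hS c hcS y hq.symm
          rcases h4 with rfl | rfl
          · rw [hyc] at hxy; exact hBc i hiM hxy
          · rw [hyc] at hxy; exact hBc j hjM hxy
        · have hgx : ∀ s ∈ S, G.Adj x s := by
            rcases hfibi i hiM x hq with rfl | rfl
            · exact hAgood i hiM
            · exact absurd (Or.inl rfl) h4
          have hgy : ∀ s ∈ S, G.Adj y s := by rw [h7]; exact hAgood j hjM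
          exact hcross x y hgx hgy (by rw [hq]; exact hiM)
            (by rw [h7, hcfA j hjM]; exact hjM) (by rw [hq, h7, hcfA j hjM]; exact hij) hxy
        · have hxc : x = c := hS c hcS x hq
          rcases h8 with rfl | rfl
          · rw [hxc] at hxy; exact hBc i hiM hxy.symm
          · rw [hxc] at hxy; exact hBc j hjM hxy.symm
        · exact hcf hxy hq
      · intro x
        split_ifs with h1 h2
        · exact hij
        · exact hScolor c hcS j hjM
        · intro he
          rcases hfibi j hjM x he with rfl | rfl
          · exact h1 rfl
          · exact h2 (Or.inr rfl)
    obtain ⟨T, hTM, hT3⟩ := Finset.exists_subset_card_eq (show 3 ≤ M.card by omega)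
    obtain ⟨i1, i2, i3, h12, h13, h23, hTeq⟩ := Finset.card_eq_three.mp hT3
    have hi1 : i1 ∈ M := hTM (by rw [hTeq]; simp)
    have hi2 : i2 ∈ M := hTM (by rw [hTeq]; simp)
    have hi3 : i3 ∈ M := hTM (by rw [hTeq]; simp)
    have hB1S : B i1 ∉ S := hMnotS (B i1) (by rw [hcfB i1 hi1]; exact hi1)
    have hB2S : B i2 ∉ S := hMnotS (B i2) (by rw [hcfB i2 hi2]; exact hi2)
    have hB3S : B i3 ∉ S := hMnotS (B i3) (by rw [hcfB i3 hi3]; exact hi3)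
    have hBne12 : B i1 ≠ B i2 := fun e => h12 (by rw [← hcfB i1 hi1, ← hcfB i2 hi2, e])
    have hBne13 : B i1 ≠ B i3 := fun e => h13 (by rw [← hcfB i1 hi1, ← hcfB i3 hi3, e])
    have hBne23 : B i2 ≠ B i3 := fun e => h23 (by rw [← hcfB i2 hi2, ← hcfB i3 hi3, e])
    have hBerase : ∀ i ∈ M, ∀ s ∈ S.erase c, G.Adj (B i) s := by
      intro i hiM s hs
      obtain ⟨hsc, hsS⟩ := Finset.mem_erase.mp hs
      exact hBadj i hiM s hsS hsc
    have hK1 : G.IsClique ((S.erase c : Finset V) : Set V) :=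
      hSclique.subset (by exact_mod_cast Finset.erase_subset c S)
    have hK2 : G.IsClique (insert (B i3) ((S.erase c : Finset V) : Set V)) :=
      hK1.insert (fun b hb _ => hBerase i3 hi3 b hb)
    have hK3 : G.IsClique (insert (B i2) (insert (B i3) ((S.erase c : Finset V) : Set V))) := by
      refine hK2.insert ?_
      intro b hb _
      rcases Set.mem_insert_iff.mp hb with rfl | hb'
      · exact hBB i2 hi2 i3 hi3 h23
      · exact hBerase i2 hi2 b hb'
    have hK4 : G.IsClique (insert (B i1) (insert (B i2)
        (insert (B i3) ((S.erase c : Finset V) : Set V)))) := by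
      refine hK3.insert ?_
      intro b hb _
      rcases Set.mem_insert_iff.mp hb with rfl | hb'
      · exact hBB i1 hi1 i2 hi2 h12
      rcases Set.mem_insert_iff.mp hb' with rfl | hb''
      · exact hBB i1 hi1 i3 hi3 h13
      · exact hBerase i1 hi1 b hb''
    have e3 : B i3 ∉ S.erase c := fun hmem => hB3S (Finset.mem_of_mem_erase hmem)
    have e2 : B i2 ∉ insert (B i3) (S.erase c) := by
      simp only [Finset.mem_insert]
      rintro (he | hmem)
      · exact hBne23 he
      · exact hB2S (Finset.mem_of_mem_erase hmem)
    have e1 : B i1 ∉ insert (B i2) (insert (B i3) (S.erase c)) := by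
      simp only [Finset.mem_insert]
      rintro (he | he | hmem)
      · exact hBne12 he
      · exact hBne13 he
      · exact hB1S (Finset.mem_of_mem_erase hmem)
    have hcard : (insert (B i1) (insert (B i2) (insert (B i3) (S.erase c)))).card
        = (S.card - 1) + 3 := by
      rw [Finset.card_insert_of_notMem e1, Finset.card_insert_of_notMem e2,
        Finset.card_insert_of_notMem e3, Finset.card_erase_of_mem hcS]
    have hle : (insert (B i1) (insert (B i2) (insert (B i3) (S.erase c)))).card
        ≤ G.cliqueNum := by
      refine SimpleGraph.IsClique.card_le_cliqueNum (tc := ?_)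
      rwa [Finset.coe_insert, Finset.coe_insert, Finset.coe_insert]
    have hS1 : 1 ≤ S.card := Finset.card_pos.mpr ⟨c, hcS⟩
    omega
end

section
/- Let G be a graph on n vertices (n sufficiently large, e.g. n ≥ 10) with χ(G) = n - 3. Then ω(G) ≥ n - 4, and this is sharp: there exists a graph on n vertices with χ = n - 3 and ω = n - 4. -/
open Finset

lemma colorable_of_indepFamily {V : Type} [Fintype V] (G : SimpleGraph V) (m k : ℕ)
    (f : Fin m → Finset V)
    (hdisj : ∀ i j, i ≠ j → Disjoint (f i) (f j))
    (hne : ∀ i, (f i).Nonempty)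
    (hind : ∀ i, ∀ u ∈ f i, ∀ v ∈ f i, ¬ G.Adj u v)
    (hk : k + m ≤ ∑ i, (f i).card) :
    G.Colorable (Fintype.card V - k) := by
  classical
  set rep : Fin m → V := fun i => (hne i).choose with hrep
  have hrepmem : ∀ i, rep i ∈ f i := fun i => (hne i).choose_spec
  set g : V → V := fun v => if h : ∃ i, v ∈ f i then rep h.choose else v with hg
  have hgmem : ∀ i v, v ∈ f i → g v = rep i := by
    intro i v hv
    have h : ∃ j, v ∈ f j := ⟨i, hv⟩
    have hj : v ∈ f h.choose := h.choose_spec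
    have : h.choose = i := by
      by_contra hne'
      exact Finset.notMem_empty v (by rw [← Finset.disjoint_iff_inter_eq_empty.mp (hdisj _ _ hne')]; exact Finset.mem_inter.2 ⟨hj, hv⟩)
    simp only [hg, dif_pos h, this]
  have hgout : ∀ v, (∀ i, v ∉ f i) → g v = v := by
    intro v hv
    simp only [hg]
    rw [dif_neg]
    rintro ⟨i, hi⟩; exact hv i hi
  -- validity
  have hvalid : ∀ {u v}, G.Adj u v → g u ≠ g v := by
    intro u v huv heq
    by_cases hu : ∃ i, u ∈ f i
    · obtain ⟨i, hi⟩ := hu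
      rw [hgmem i u hi] at heq
      by_cases hv : ∃ j, v ∈ f j
      · obtain ⟨j, hj⟩ := hv
        rw [hgmem j v hj] at heq
        by_cases hij : i = j
        · exact hind i u hi v (hij ▸ hj) huv
        · exact Finset.notMem_empty (rep i)
            (by rw [← Finset.disjoint_iff_inter_eq_empty.mp (hdisj i j hij)]
                exact Finset.mem_inter.2 ⟨hrepmem i, heq ▸ hrepmem j⟩)
      · push_neg at hv
        rw [hgout v hv] at heq
        exact hv i (heq ▸ hrepmem i)
    · push_neg at hu
      rw [hgout u hu] at heq
      by_cases hv : ∃ j, v ∈ f j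
      · obtain ⟨j, hj⟩ := hv
        rw [hgmem j v hj] at heq
        exact hu j (heq ▸ hrepmem j)
      · push_neg at hv
        rw [hgout v hv] at heq
        exact G.ne_of_adj huv heq
  set I : Finset V := Finset.univ.image g with hI
  have C : G.Coloring ↥I := SimpleGraph.Coloring.mk
    (fun v => ⟨g v, by simp [hI]⟩)
    (by intro u v huv h; exact hvalid huv (congrArg Subtype.val h))
  have hcol : G.Colorable (Fintype.card ↥I) := C.colorable
  rw [Fintype.card_coe] at hcol
  refine hcol.mono ?_
  -- card bound
  have hsub : I ⊆ (Finset.univ \ Finset.univ.biUnion f) ∪ Finset.univ.image rep := by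
    intro x hx
    simp only [hI, Finset.mem_image] at hx
    obtain ⟨v, _, hv⟩ := hx
    by_cases h : ∃ i, v ∈ f i
    · obtain ⟨i, hi⟩ := h
      rw [hgmem i v hi] at hv
      exact Finset.mem_union_right _ (Finset.mem_image.2 ⟨i, Finset.mem_univ i, hv⟩)
    · push_neg at h
      rw [hgout v h] at hv
      refine Finset.mem_union_left _ ?_
      simp only [Finset.mem_sdiff, Finset.mem_univ, true_and, Finset.mem_biUnion, not_exists]
      intro i hi
      exact h i (hv ▸ hi)
  have hUcard : (Finset.univ.biUnion f).card = ∑ i, (f i).card :=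
    Finset.card_biUnion (fun i _ j _ hij => hdisj i j hij)
  have hUle : (Finset.univ.biUnion f).card ≤ Fintype.card V := by
    simpa using Finset.card_le_card (Finset.subset_univ _)
  have h1 : I.card ≤ (Fintype.card V - ∑ i, (f i).card) + m :=
    le_trans (Finset.card_le_card hsub)
      (le_trans (Finset.card_union_le _ _)
        (by
          gcongr
          · simp [Finset.card_sdiff_of_subset (Finset.subset_univ _), hUcard]
          · exact le_trans (Finset.card_image_le) (by simp)))
  have := hUcard ▸ hUle
  omega


/-- pair-disjointness of {a,b} and {c,d} -/
def PD {V : Type} (a b c d : V) : Prop := a ≠ c ∧ a ≠ d ∧ b ≠ c ∧ b ≠ d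

lemma card4 {V : Type} [DecidableEq V] (a b c d : V) :
    ({a,b,c,d} : Finset V).card ≤ 4 := by
  refine le_trans (Finset.card_insert_le _ _) ?_
  refine le_trans (Nat.add_le_add_right (Finset.card_insert_le _ _) 1) ?_
  refine le_trans (Nat.add_le_add_right (Nat.add_le_add_right (Finset.card_insert_le _ _) 1) 1) ?_
  simp

lemma cover_of_sparse {V : Type} (H : SimpleGraph V)
    (h4 : ∀ a₁ b₁ a₂ b₂ a₃ b₃ a₄ b₄ : V,
      H.Adj a₁ b₁ → H.Adj a₂ b₂ → H.Adj a₃ b₃ → H.Adj a₄ b₄ →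
      PD a₁ b₁ a₂ b₂ → PD a₁ b₁ a₃ b₃ → PD a₁ b₁ a₄ b₄ →
      PD a₂ b₂ a₃ b₃ → PD a₂ b₂ a₄ b₄ → PD a₃ b₃ a₄ b₄ → False)
    (hte : ∀ x y z a₁ b₁ a₂ b₂ : V,
      H.Adj x y → H.Adj x z → H.Adj y z → H.Adj a₁ b₁ → H.Adj a₂ b₂ →
      PD a₁ b₁ a₂ b₂ →
      a₁ ≠ x → a₁ ≠ y → a₁ ≠ z → b₁ ≠ x → b₁ ≠ y → b₁ ≠ z →
      a₂ ≠ x → a₂ ≠ y → a₂ ≠ z → b₂ ≠ x → b₂ ≠ y → b₂ ≠ z → False)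
    (htt : ∀ x y z x' y' z' : V,
      H.Adj x y → H.Adj x z → H.Adj y z → H.Adj x' y' → H.Adj x' z' → H.Adj y' z' →
      x' ≠ x → x' ≠ y → x' ≠ z → y' ≠ x → y' ≠ y → y' ≠ z → z' ≠ x → z' ≠ y → z' ≠ z → False) :
    ∃ S : Finset V, S.card ≤ 4 ∧ ∀ u v, H.Adj u v → u ∈ S ∨ v ∈ S := by
  classical
  by_cases htri : ∃ x y z, H.Adj x y ∧ H.Adj x z ∧ H.Adj y z
  · -- triangle case
    obtain ⟨x, y, z, hxy, hxz, hyz⟩ := htri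
    by_cases h3 : ∀ u v, H.Adj u v → u ∈ ({x,y,z} : Finset V) ∨ v ∈ ({x,y,z} : Finset V)
    · exact ⟨{x,y,z}, by simpa using card4 x x y z, by
        intro u v huv
        rcases h3 u v huv with h | h
        · exact Or.inl h
        · exact Or.inr h⟩
    push_neg at h3
    obtain ⟨a, b, hab, haS, hbS⟩ := h3
    simp only [Finset.mem_insert, Finset.mem_singleton, not_or] at haS hbS
    obtain ⟨hax, hay, haz⟩ := haS
    obtain ⟨hbx, hby, hbz⟩ := hbS
    by_cases hA : ∀ u v, H.Adj u v → u ∈ ({x,y,z,a} : Finset V) ∨ v ∈ ({x,y,z,a} : Finset V)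
    · exact ⟨_, card4 x y z a, hA⟩
    by_cases hB : ∀ u v, H.Adj u v → u ∈ ({x,y,z,b} : Finset V) ∨ v ∈ ({x,y,z,b} : Finset V)
    · exact ⟨_, card4 x y z b, hB⟩
    exfalso
    push_neg at hA hB
    obtain ⟨u₁, v₁, h1, hu1, hv1⟩ := hA
    obtain ⟨u₂, v₂, h2, hu2, hv2⟩ := hB
    simp only [Finset.mem_insert, Finset.mem_singleton, not_or] at hu1 hv1 hu2 hv2
    obtain ⟨hu1x, hu1y, hu1z, hu1a⟩ := hu1
    obtain ⟨hv1x, hv1y, hv1z, hv1a⟩ := hv1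
    obtain ⟨hu2x, hu2y, hu2z, hu2b⟩ := hu2
    obtain ⟨hv2x, hv2y, hv2z, hv2b⟩ := hv2
    -- edge u₁v₁ must contain b
    have hb1 : u₁ = b ∨ v₁ = b := by
      by_contra hc
      push_neg at hc
      exact hte x y z a b u₁ v₁ hxy hxz hyz hab h1
        ⟨fun h => hu1a h.symm, fun h => hv1a h.symm, fun h => hc.1 h.symm, fun h => hc.2 h.symm⟩
        hax hay haz hbx hby hbz hu1x hu1y hu1z hv1x hv1y hv1z
    have hb2 : u₂ = a ∨ v₂ = a := by
      by_contra hc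
      push_neg at hc
      exact hte x y z a b u₂ v₂ hxy hxz hyz hab h2
        ⟨fun h => hc.1 h.symm, fun h => hc.2 h.symm, fun h => hu2b h.symm, fun h => hv2b h.symm⟩
        hax hay haz hbx hby hbz hu2x hu2y hu2z hv2x hv2y hv2z
    obtain ⟨w, hbw, hwx, hwy, hwz, hwa⟩ :
        ∃ w, H.Adj b w ∧ w ≠ x ∧ w ≠ y ∧ w ≠ z ∧ w ≠ a := by
      rcases hb1 with rfl | rfl
      · exact ⟨v₁, h1, hv1x, hv1y, hv1z, hv1a⟩
      · exact ⟨u₁, h1.symm, hu1x, hu1y, hu1z, hu1a⟩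
    obtain ⟨w', haw', hw'x, hw'y, hw'z, hw'b⟩ :
        ∃ w', H.Adj a w' ∧ w' ≠ x ∧ w' ≠ y ∧ w' ≠ z ∧ w' ≠ b := by
      rcases hb2 with rfl | rfl
      · exact ⟨v₂, h2, hv2x, hv2y, hv2z, hv2b⟩
      · exact ⟨u₂, h2.symm, hu2x, hu2y, hu2z, hu2b⟩
    by_cases hww : w = w'
    · subst hww
      exact htt x y z a b w hxy hxz hyz hab haw' hbw
        hax hay haz hbx hby hbz hwx hwy hwz
    · exact hte x y z b w a w' hxy hxz hyz hbw haw'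
        ⟨hab.ne', fun h => hw'b h.symm, hwa, hww⟩
        hbx hby hbz hwx hwy hwz hax hay haz hw'x hw'y hw'z
  · -- triangle-free case
    by_cases h0 : ∀ u v, H.Adj u v → u ∈ (∅ : Finset V) ∨ v ∈ (∅ : Finset V)
    · exact ⟨∅, by simp, h0⟩
    push_neg at h0
    obtain ⟨a₁, b₁, he1, -, -⟩ := h0
    by_cases hco1 : ∀ u v, H.Adj u v → u ∈ ({a₁, b₁} : Finset V) ∨ v ∈ ({a₁, b₁} : Finset V)
    · refine ⟨{a₁, b₁}, ?_, hco1⟩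
      refine le_trans (Finset.card_insert_le _ _) ?_
      simp
    push_neg at hco1
    obtain ⟨a₂, b₂, he2, ha2, hb2⟩ := hco1
    simp only [Finset.mem_insert, Finset.mem_singleton, not_or] at ha2 hb2
    by_cases hco2 : ∀ u v, H.Adj u v →
        u ∈ ({a₁, b₁, a₂, b₂} : Finset V) ∨ v ∈ ({a₁, b₁, a₂, b₂} : Finset V)
    · exact ⟨_, card4 a₁ b₁ a₂ b₂, hco2⟩
    push_neg at hco2
    obtain ⟨a₃, b₃, he3, ha3, hb3⟩ := hco2
    simp only [Finset.mem_insert, Finset.mem_singleton, not_or] at ha3 hb3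
    obtain ⟨ha3a1, ha3b1, ha3a2, ha3b2⟩ := ha3
    obtain ⟨hb3a1, hb3b1, hb3a2, hb3b2⟩ := hb3
    obtain ⟨ha2a1, ha2b1⟩ := ha2
    obtain ⟨hb2a1, hb2b1⟩ := hb2
    have hPD12 : PD a₁ b₁ a₂ b₂ := ⟨(Ne.symm ha2a1), (Ne.symm hb2a1), (Ne.symm ha2b1), (Ne.symm hb2b1)⟩
    have hPD13 : PD a₁ b₁ a₃ b₃ := ⟨(Ne.symm ha3a1), (Ne.symm hb3a1), (Ne.symm ha3b1), (Ne.symm hb3b1)⟩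
    have hPD23 : PD a₂ b₂ a₃ b₃ := ⟨(Ne.symm ha3a2), (Ne.symm hb3a2), (Ne.symm ha3b2), (Ne.symm hb3b2)⟩
    have hmeet : ∀ u v, H.Adj u v →
        (u = a₁ ∨ u = b₁ ∨ u = a₂ ∨ u = b₂ ∨ u = a₃ ∨ u = b₃) ∨
        (v = a₁ ∨ v = b₁ ∨ v = a₂ ∨ v = b₂ ∨ v = a₃ ∨ v = b₃) := by
      intro u v huv
      by_contra hc
      push_neg at hc
      obtain ⟨⟨hu1, hu2, hu3, hu4, hu5, hu6⟩, hv1, hv2, hv3, hv4, hv5, hv6⟩ := hc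
      exact h4 a₁ b₁ a₂ b₂ a₃ b₃ u v he1 he2 he3 huv hPD12 hPD13
        ⟨(Ne.symm hu1), (Ne.symm hv1), (Ne.symm hu2), (Ne.symm hv2)⟩ hPD23
        ⟨(Ne.symm hu3), (Ne.symm hv3), (Ne.symm hu4), (Ne.symm hv4)⟩
        ⟨(Ne.symm hu5), (Ne.symm hv5), (Ne.symm hu6), (Ne.symm hv6)⟩
    have side : ∀ a b c d e f : V, H.Adj a b → H.Adj c d → H.Adj e f →
        PD a b c d → PD a b e f → PD c d e f →
        (a = a₁ ∨ a = b₁ ∨ a = a₂ ∨ a = b₂ ∨ a = a₃ ∨ a = b₃) →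
        (b = a₁ ∨ b = b₁ ∨ b = a₂ ∨ b = b₂ ∨ b = a₃ ∨ b = b₃) →
        (c = a₁ ∨ c = b₁ ∨ c = a₂ ∨ c = b₂ ∨ c = a₃ ∨ c = b₃) →
        (d = a₁ ∨ d = b₁ ∨ d = a₂ ∨ d = b₂ ∨ d = a₃ ∨ d = b₃) →
        (e = a₁ ∨ e = b₁ ∨ e = a₂ ∨ e = b₂ ∨ e = a₃ ∨ e = b₃) →
        (f = a₁ ∨ f = b₁ ∨ f = a₂ ∨ f = b₂ ∨ f = a₃ ∨ f = b₃) →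
        ((∀ u, ¬(u = a₁ ∨ u = b₁ ∨ u = a₂ ∨ u = b₂ ∨ u = a₃ ∨ u = b₃) → ¬H.Adj u a) ∨
         (∀ u, ¬(u = a₁ ∨ u = b₁ ∨ u = a₂ ∨ u = b₂ ∨ u = a₃ ∨ u = b₃) → ¬H.Adj u b)) := by
      intro a b c d e f hab hcd hef hPD1 hPD2 hPD3 haW hbW hcW hdW heW hfW
      by_contra hcon
      push_neg at hcon
      obtain ⟨⟨u, huW, hua⟩, v, hvW, hvb⟩ := hcon
      obtain ⟨hu1, hu2, hu3, hu4, hu5, hu6⟩ := huW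
      obtain ⟨hv1, hv2, hv3, hv4, hv5, hv6⟩ := hvW
      by_cases huv : u = v
      · subst huv
        exact htri ⟨u, a, b, hua, hvb, hab⟩
      · have hub : u ≠ b := by rcases hbW with rfl | rfl | rfl | rfl | rfl | rfl <;> assumption
        have hva : v ≠ a := by rcases haW with rfl | rfl | rfl | rfl | rfl | rfl <;> assumption
        have huc : u ≠ c := by rcases hcW with rfl | rfl | rfl | rfl | rfl | rfl <;> assumption
        have hud : u ≠ d := by rcases hdW with rfl | rfl | rfl | rfl | rfl | rfl <;> assumption
        have hue : u ≠ e := by rcases heW with rfl | rfl | rfl | rfl | rfl | rfl <;> assumption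
        have huf : u ≠ f := by rcases hfW with rfl | rfl | rfl | rfl | rfl | rfl <;> assumption
        have hvc : v ≠ c := by rcases hcW with rfl | rfl | rfl | rfl | rfl | rfl <;> assumption
        have hvd : v ≠ d := by rcases hdW with rfl | rfl | rfl | rfl | rfl | rfl <;> assumption
        have hve : v ≠ e := by rcases heW with rfl | rfl | rfl | rfl | rfl | rfl <;> assumption
        have hvf : v ≠ f := by rcases hfW with rfl | rfl | rfl | rfl | rfl | rfl <;> assumption
        exact h4 u a v b c d e f hua hvb hcd hef
          ⟨huv, hub, hva.symm, hab.ne⟩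
          ⟨huc, hud, hPD1.1, hPD1.2.1⟩
          ⟨hue, huf, hPD2.1, hPD2.2.1⟩
          ⟨hvc, hvd, hPD1.2.2.1, hPD1.2.2.2⟩
          ⟨hve, hvf, hPD2.2.2.1, hPD2.2.2.2⟩
          hPD3
    -- choose clean sides
    have hPD12' : PD b₁ a₁ a₂ b₂ := ⟨hPD12.2.2.1, hPD12.2.2.2, hPD12.1, hPD12.2.1⟩
    have hPD13' : PD b₁ a₁ a₃ b₃ := ⟨hPD13.2.2.1, hPD13.2.2.2, hPD13.1, hPD13.2.1⟩
    have hPD23' : PD b₂ a₂ a₃ b₃ := ⟨hPD23.2.2.1, hPD23.2.2.2, hPD23.1, hPD23.2.1⟩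
    obtain ⟨c₁, d₁, hcd₁, hm₁, hn₁, hclean₁⟩ :
        ∃ c d, H.Adj c d ∧ ((c = a₁ ∧ d = b₁) ∨ (c = b₁ ∧ d = a₁)) ∧ c ≠ d ∧
          ∀ u, ¬(u = a₁ ∨ u = b₁ ∨ u = a₂ ∨ u = b₂ ∨ u = a₃ ∨ u = b₃) → ¬H.Adj u d := by
      rcases side a₁ b₁ a₂ b₂ a₃ b₃ he1 he2 he3 hPD12 hPD13 hPD23
        (Or.inl rfl) (Or.inr (Or.inl rfl)) (Or.inr (Or.inr (Or.inl rfl)))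
        (Or.inr (Or.inr (Or.inr (Or.inl rfl))))
        (Or.inr (Or.inr (Or.inr (Or.inr (Or.inl rfl)))))
        (Or.inr (Or.inr (Or.inr (Or.inr (Or.inr rfl))))) with hcl | hcl
      · exact ⟨b₁, a₁, he1.symm, Or.inr ⟨rfl, rfl⟩, he1.ne', hcl⟩
      · exact ⟨a₁, b₁, he1, Or.inl ⟨rfl, rfl⟩, he1.ne, hcl⟩
    obtain ⟨c₂, d₂, hcd₂, hm₂, hn₂, hclean₂⟩ :
        ∃ c d, H.Adj c d ∧ ((c = a₂ ∧ d = b₂) ∨ (c = b₂ ∧ d = a₂)) ∧ c ≠ d ∧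
          ∀ u, ¬(u = a₁ ∨ u = b₁ ∨ u = a₂ ∨ u = b₂ ∨ u = a₃ ∨ u = b₃) → ¬H.Adj u d := by
      rcases side a₂ b₂ a₁ b₁ a₃ b₃ he2 he1 he3
        ⟨hPD12.1.symm, hPD12.2.2.1.symm, hPD12.2.1.symm, hPD12.2.2.2.symm⟩ hPD23 hPD13
        (Or.inr (Or.inr (Or.inl rfl))) (Or.inr (Or.inr (Or.inr (Or.inl rfl))))
        (Or.inl rfl) (Or.inr (Or.inl rfl))
        (Or.inr (Or.inr (Or.inr (Or.inr (Or.inl rfl)))))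
        (Or.inr (Or.inr (Or.inr (Or.inr (Or.inr rfl))))) with hcl | hcl
      · exact ⟨b₂, a₂, he2.symm, Or.inr ⟨rfl, rfl⟩, he2.ne', hcl⟩
      · exact ⟨a₂, b₂, he2, Or.inl ⟨rfl, rfl⟩, he2.ne, hcl⟩
    obtain ⟨c₃, d₃, hcd₃, hm₃, hn₃, hclean₃⟩ :
        ∃ c d, H.Adj c d ∧ ((c = a₃ ∧ d = b₃) ∨ (c = b₃ ∧ d = a₃)) ∧ c ≠ d ∧
          ∀ u, ¬(u = a₁ ∨ u = b₁ ∨ u = a₂ ∨ u = b₂ ∨ u = a₃ ∨ u = b₃) → ¬H.Adj u d := by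
      rcases side a₃ b₃ a₁ b₁ a₂ b₂ he3 he1 he2
        ⟨hPD13.1.symm, hPD13.2.2.1.symm, hPD13.2.1.symm, hPD13.2.2.2.symm⟩
        ⟨hPD23.1.symm, hPD23.2.2.1.symm, hPD23.2.1.symm, hPD23.2.2.2.symm⟩ hPD12
        (Or.inr (Or.inr (Or.inr (Or.inr (Or.inl rfl)))))
        (Or.inr (Or.inr (Or.inr (Or.inr (Or.inr rfl)))))
        (Or.inl rfl) (Or.inr (Or.inl rfl))
        (Or.inr (Or.inr (Or.inl rfl))) (Or.inr (Or.inr (Or.inr (Or.inl rfl)))) with hcl | hcl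
      · exact ⟨b₃, a₃, he3.symm, Or.inr ⟨rfl, rfl⟩, he3.ne', hcl⟩
      · exact ⟨a₃, b₃, he3, Or.inl ⟨rfl, rfl⟩, he3.ne, hcl⟩
    -- final assembly
    have hWd : ∀ u, u ≠ c₁ → u ≠ c₂ → u ≠ c₃ →
        (u = a₁ ∨ u = b₁ ∨ u = a₂ ∨ u = b₂ ∨ u = a₃ ∨ u = b₃) →
        (u = d₁ ∨ u = d₂ ∨ u = d₃) := by
      intro u h1 h2 h3 hw
      rcases hm₁ with ⟨hc, hd⟩ | ⟨hc, hd⟩ <;> rcases hm₂ with ⟨hc', hd'⟩ | ⟨hc', hd'⟩ <;>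
        rcases hm₃ with ⟨hc'', hd''⟩ | ⟨hc'', hd''⟩ <;> subst_vars <;> tauto
    have final : ∀ t : V,
        (∀ u v, H.Adj u v → (u = d₁ ∨ u = d₂ ∨ u = d₃) → (v = d₁ ∨ v = d₂ ∨ v = d₃) →
          t = u ∨ t = v) →
        ∃ S : Finset V, S.card ≤ 4 ∧ ∀ u v, H.Adj u v → u ∈ S ∨ v ∈ S := by
      intro t ht
      refine ⟨{c₁, c₂, c₃, t}, card4 _ _ _ _, ?_⟩
      intro u v huv
      by_contra hc
      push_neg at hc
      obtain ⟨hu, hv⟩ := hc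
      simp only [Finset.mem_insert, Finset.mem_singleton, not_or] at hu hv
      rcases hmeet u v huv with hw | hw
      · have hud := hWd u hu.1 hu.2.1 hu.2.2.1 hw
        by_cases hvW : v = a₁ ∨ v = b₁ ∨ v = a₂ ∨ v = b₂ ∨ v = a₃ ∨ v = b₃
        · have hvd := hWd v hv.1 hv.2.1 hv.2.2.1 hvW
          rcases ht u v huv hud hvd with h | h
          · exact hu.2.2.2 h.symm
          · exact hv.2.2.2 h.symm
        · rcases hud with rfl | rfl | rfl
          · exact hclean₁ v hvW huv.symm
          · exact hclean₂ v hvW huv.symm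
          · exact hclean₃ v hvW huv.symm
      · have hvd := hWd v hv.1 hv.2.1 hv.2.2.1 hw
        by_cases huW : u = a₁ ∨ u = b₁ ∨ u = a₂ ∨ u = b₂ ∨ u = a₃ ∨ u = b₃
        · have hud := hWd u hu.1 hu.2.1 hu.2.2.1 huW
          rcases ht u v huv hud hvd with h | h
          · exact hu.2.2.2 h.symm
          · exact hv.2.2.2 h.symm
        · rcases hvd with rfl | rfl | rfl
          · exact hclean₁ u huW huv
          · exact hclean₂ u huW huv
          · exact hclean₃ u huW huv
    by_cases h12 : H.Adj d₁ d₂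
    · by_cases h13 : H.Adj d₁ d₃
      · have h23 : ¬H.Adj d₂ d₃ := fun h => htri ⟨d₁, d₂, d₃, h12, h13, h⟩
        have h23' : ¬H.Adj d₃ d₂ := fun h => h23 h.symm
        refine final d₁ ?_
        intro u v huv hud hvd
        have hne := huv.ne
        rcases hud with rfl | rfl | rfl <;> rcases hvd with rfl | rfl | rfl <;>
          (first | exact Or.inl rfl | exact Or.inr rfl | exact absurd rfl hne | exact absurd huv h23 | exact absurd huv h23')
      · by_cases h23 : H.Adj d₂ d₃
        · have h13' : ¬H.Adj d₃ d₁ := fun h => h13 h.symm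
          refine final d₂ ?_
          intro u v huv hud hvd
          have hne := huv.ne
          rcases hud with rfl | rfl | rfl <;> rcases hvd with rfl | rfl | rfl <;>
            (first | exact Or.inl rfl | exact Or.inr rfl | exact absurd rfl hne | exact absurd huv h13 | exact absurd huv h13')
        · have h13' : ¬H.Adj d₃ d₁ := fun h => h13 h.symm
          have h23' : ¬H.Adj d₃ d₂ := fun h => h23 h.symm
          refine final d₁ ?_
          intro u v huv hud hvd
          have hne := huv.ne
          rcases hud with rfl | rfl | rfl <;> rcases hvd with rfl | rfl | rfl <;>
            (first | exact Or.inl rfl | exact Or.inr rfl | exact absurd rfl hne | exact absurd huv h13 | exact absurd huv h13' | exact absurd huv h23 | exact absurd huv h23')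
    · have h12' : ¬H.Adj d₂ d₁ := fun h => h12 h.symm
      refine final d₃ ?_
      intro u v huv hud hvd
      have hne := huv.ne
      rcases hud with rfl | rfl | rfl <;> rcases hvd with rfl | rfl | rfl <;>
        (first | exact Or.inl rfl | exact Or.inr rfl | exact absurd rfl hne | exact absurd huv h12 | exact absurd huv h12')

lemma pd_disj {V : Type} [DecidableEq V] {a b c d : V} (h : PD a b c d) :
    Disjoint ({a, b} : Finset V) {c, d} := by
  rw [Finset.disjoint_left]
  intro x hx hx'
  simp only [Finset.mem_insert, Finset.mem_singleton] at hx hx'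
  obtain ⟨p1, p2, p3, p4⟩ := h
  rcases hx with rfl | rfl <;> rcases hx' with rfl | rfl <;> tauto

lemma pair_indep {V : Type} [DecidableEq V] {G : SimpleGraph V} {a b : V} (h : Gᶜ.Adj a b) :
    ∀ u ∈ ({a, b} : Finset V), ∀ v ∈ ({a, b} : Finset V), ¬G.Adj u v := by
  intro u hu v hv hadj
  rw [SimpleGraph.compl_adj] at h
  simp only [Finset.mem_insert, Finset.mem_singleton] at hu hv
  rcases hu with rfl | rfl <;> rcases hv with rfl | rfl
  · exact G.loopless.irrefl _ hadj
  · exact h.2 hadj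
  · exact h.2 hadj.symm
  · exact G.loopless.irrefl _ hadj

lemma triple_indep {V : Type} [DecidableEq V] {G : SimpleGraph V} {a b c : V}
    (hab : Gᶜ.Adj a b) (hac : Gᶜ.Adj a c) (hbc : Gᶜ.Adj b c) :
    ∀ u ∈ ({a, b, c} : Finset V), ∀ v ∈ ({a, b, c} : Finset V), ¬G.Adj u v := by
  intro u hu v hv hadj
  rw [SimpleGraph.compl_adj] at hab hac hbc
  simp only [Finset.mem_insert, Finset.mem_singleton] at hu hv
  rcases hu with rfl | rfl | rfl <;> rcases hv with rfl | rfl | rfl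
  · exact G.loopless.irrefl _ hadj
  · exact hab.2 hadj
  · exact hac.2 hadj
  · exact hab.2 hadj.symm
  · exact G.loopless.irrefl _ hadj
  · exact hbc.2 hadj
  · exact hac.2 hadj.symm
  · exact hbc.2 hadj.symm
  · exact G.loopless.irrefl _ hadj

lemma disj32 {V : Type} [DecidableEq V] {x y z a b : V} (h1 : a ≠ x) (h2 : a ≠ y) (h3 : a ≠ z)
    (h4 : b ≠ x) (h5 : b ≠ y) (h6 : b ≠ z) : Disjoint ({x, y, z} : Finset V) {a, b} := by
  rw [Finset.disjoint_right]
  intro w hw hw'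
  simp only [Finset.mem_insert, Finset.mem_singleton] at hw hw'
  rcases hw with rfl | rfl <;> tauto

lemma disj33 {V : Type} [DecidableEq V] {x y z a b c : V} (h1 : a ≠ x) (h2 : a ≠ y) (h3 : a ≠ z)
    (h4 : b ≠ x) (h5 : b ≠ y) (h6 : b ≠ z) (h7 : c ≠ x) (h8 : c ≠ y) (h9 : c ≠ z) :
    Disjoint ({x, y, z} : Finset V) {a, b, c} := by
  rw [Finset.disjoint_right]
  intro w hw hw'
  simp only [Finset.mem_insert, Finset.mem_singleton] at hw hw'
  rcases hw with rfl | rfl | rfl <;> tauto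

lemma key2 {V : Type} [Fintype V] (G : SimpleGraph V) (k : ℕ) (s t : Finset V)
    (d1 : Disjoint s t) (n1 : s.Nonempty) (n2 : t.Nonempty)
    (i1 : ∀ a ∈ s, ∀ b ∈ s, ¬G.Adj a b) (i2 : ∀ a ∈ t, ∀ b ∈ t, ¬G.Adj a b)
    (hsum : k + 2 ≤ s.card + t.card) : G.Colorable (Fintype.card V - k) := by
  refine colorable_of_indepFamily G 2 k (fun j : Fin 2 => if j.val = 0 then s else t)
    ?_ ?_ ?_ ?_
  · intro i j hij
    fin_cases i <;> fin_cases j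
    exacts [absurd rfl hij, d1, d1.symm, absurd rfl hij]
  · intro i; fin_cases i
    exacts [n1, n2]
  · intro i; fin_cases i
    exacts [i1, i2]
  · rw [Fin.sum_univ_two]; exact hsum

lemma key3 {V : Type} [Fintype V] (G : SimpleGraph V) (k : ℕ) (s t u : Finset V)
    (d1 : Disjoint s t) (d2 : Disjoint s u) (d3 : Disjoint t u)
    (n1 : s.Nonempty) (n2 : t.Nonempty) (n3 : u.Nonempty)
    (i1 : ∀ a ∈ s, ∀ b ∈ s, ¬G.Adj a b) (i2 : ∀ a ∈ t, ∀ b ∈ t, ¬G.Adj a b)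
    (i3 : ∀ a ∈ u, ∀ b ∈ u, ¬G.Adj a b)
    (hsum : k + 3 ≤ s.card + t.card + u.card) : G.Colorable (Fintype.card V - k) := by
  refine colorable_of_indepFamily G 3 k
    (fun j : Fin 3 => if j.val = 0 then s else if j.val = 1 then t else u) ?_ ?_ ?_ ?_
  · intro i j hij
    fin_cases i <;> fin_cases j
    exacts [absurd rfl hij, d1, d2, d1.symm, absurd rfl hij, d3, d2.symm, d3.symm,
      absurd rfl hij]
  · intro i; fin_cases i
    exacts [n1, n2, n3]
  · intro i; fin_cases i
    exacts [i1, i2, i3]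
  · rw [Fin.sum_univ_three]; exact hsum

lemma key4 {V : Type} [Fintype V] (G : SimpleGraph V) (k : ℕ) (s t u w : Finset V)
    (d1 : Disjoint s t) (d2 : Disjoint s u) (d3 : Disjoint s w)
    (d4 : Disjoint t u) (d5 : Disjoint t w) (d6 : Disjoint u w)
    (n1 : s.Nonempty) (n2 : t.Nonempty) (n3 : u.Nonempty) (n4 : w.Nonempty)
    (i1 : ∀ a ∈ s, ∀ b ∈ s, ¬G.Adj a b) (i2 : ∀ a ∈ t, ∀ b ∈ t, ¬G.Adj a b)
    (i3 : ∀ a ∈ u, ∀ b ∈ u, ¬G.Adj a b) (i4 : ∀ a ∈ w, ∀ b ∈ w, ¬G.Adj a b)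
    (hsum : k + 4 ≤ s.card + t.card + u.card + w.card) :
    G.Colorable (Fintype.card V - k) := by
  refine colorable_of_indepFamily G 4 k
    (fun j : Fin 4 => if j.val = 0 then s else if j.val = 1 then t else
      if j.val = 2 then u else w) ?_ ?_ ?_ ?_
  · intro i j hij
    fin_cases i <;> fin_cases j
    exacts [absurd rfl hij, d1, d2, d3,
      d1.symm, absurd rfl hij, d4, d5,
      d2.symm, d4.symm, absurd rfl hij, d6,
      d3.symm, d5.symm, d6.symm, absurd rfl hij]
  · intro i; fin_cases i
    exacts [n1, n2, n3, n4]
  · intro i; fin_cases i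
    exacts [i1, i2, i3, i4]
  · rw [Fin.sum_univ_four]; exact hsum

lemma clique_of_not_colorable {V : Type} [Fintype V] (G : SimpleGraph V)
    (hnc : ¬ G.Colorable (Fintype.card V - 4)) :
    Fintype.card V - 4 ≤ G.cliqueNum := by
  classical
  have h4' : ∀ a₁ b₁ a₂ b₂ a₃ b₃ a₄ b₄ : V,
      Gᶜ.Adj a₁ b₁ → Gᶜ.Adj a₂ b₂ → Gᶜ.Adj a₃ b₃ → Gᶜ.Adj a₄ b₄ →
      PD a₁ b₁ a₂ b₂ → PD a₁ b₁ a₃ b₃ → PD a₁ b₁ a₄ b₄ →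
      PD a₂ b₂ a₃ b₃ → PD a₂ b₂ a₄ b₄ → PD a₃ b₃ a₄ b₄ → False := by
    intro a₁ b₁ a₂ b₂ a₃ b₃ a₄ b₄ h1 h2 h3 h4 p12 p13 p14 p23 p24 p34
    refine hnc (key4 G 4 {a₁, b₁} {a₂, b₂} {a₃, b₃} {a₄, b₄}
      (pd_disj p12) (pd_disj p13) (pd_disj p14) (pd_disj p23) (pd_disj p24) (pd_disj p34)
      (Finset.insert_nonempty _ _) (Finset.insert_nonempty _ _)
      (Finset.insert_nonempty _ _) (Finset.insert_nonempty _ _)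
      (pair_indep h1) (pair_indep h2) (pair_indep h3) (pair_indep h4) ?_)
    rw [Finset.card_pair h1.ne, Finset.card_pair h2.ne, Finset.card_pair h3.ne,
      Finset.card_pair h4.ne]
  have hte' : ∀ x y z a₁ b₁ a₂ b₂ : V,
      Gᶜ.Adj x y → Gᶜ.Adj x z → Gᶜ.Adj y z → Gᶜ.Adj a₁ b₁ → Gᶜ.Adj a₂ b₂ →
      PD a₁ b₁ a₂ b₂ →
      a₁ ≠ x → a₁ ≠ y → a₁ ≠ z → b₁ ≠ x → b₁ ≠ y → b₁ ≠ z →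
      a₂ ≠ x → a₂ ≠ y → a₂ ≠ z → b₂ ≠ x → b₂ ≠ y → b₂ ≠ z → False := by
    intro x y z a₁ b₁ a₂ b₂ hxy hxz hyz h1 h2 p12 q1 q2 q3 q4 q5 q6 q7 q8 q9 q10 q11 q12
    refine hnc (key3 G 4 {x, y, z} {a₁, b₁} {a₂, b₂}
      (disj32 q1 q2 q3 q4 q5 q6) (disj32 q7 q8 q9 q10 q11 q12) (pd_disj p12)
      (Finset.insert_nonempty _ _) (Finset.insert_nonempty _ _) (Finset.insert_nonempty _ _)
      (triple_indep hxy hxz hyz) (pair_indep h1) (pair_indep h2) ?_)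
    rw [Finset.card_insert_of_notMem (by simp [hxy.ne, hxz.ne]), Finset.card_pair hyz.ne,
      Finset.card_pair h1.ne, Finset.card_pair h2.ne]
  have htt' : ∀ x y z x' y' z' : V,
      Gᶜ.Adj x y → Gᶜ.Adj x z → Gᶜ.Adj y z → Gᶜ.Adj x' y' → Gᶜ.Adj x' z' → Gᶜ.Adj y' z' →
      x' ≠ x → x' ≠ y → x' ≠ z → y' ≠ x → y' ≠ y → y' ≠ z →
      z' ≠ x → z' ≠ y → z' ≠ z → False := by
    intro x y z x' y' z' hxy hxz hyz hxy' hxz' hyz' q1 q2 q3 q4 q5 q6 q7 q8 q9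
    refine hnc (key2 G 4 {x, y, z} {x', y', z'}
      (disj33 q1 q2 q3 q4 q5 q6 q7 q8 q9)
      (Finset.insert_nonempty _ _) (Finset.insert_nonempty _ _)
      (triple_indep hxy hxz hyz) (triple_indep hxy' hxz' hyz') ?_)
    rw [Finset.card_insert_of_notMem (by simp [hxy.ne, hxz.ne]), Finset.card_pair hyz.ne,
      Finset.card_insert_of_notMem (by simp [hxy'.ne, hxz'.ne]), Finset.card_pair hyz'.ne]
  obtain ⟨S, hS4, hScov⟩ := cover_of_sparse Gᶜ h4' hte' htt'
  set K : Finset V := Finset.univ \ S with hK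
  have hclique : G.IsClique ↑K := by
    intro u hu v hv huv
    by_contra hnadj
    have hc : Gᶜ.Adj u v := by rw [SimpleGraph.compl_adj]; exact ⟨huv, hnadj⟩
    rcases hScov u v hc with h | h
    · simp only [hK, Finset.coe_sdiff, Set.mem_diff, Finset.coe_univ] at hu
      exact hu.2 h
    · simp only [hK, Finset.coe_sdiff, Set.mem_diff, Finset.coe_univ] at hv
      exact hv.2 h
  have hKcard : Fintype.card V - 4 ≤ K.card := by
    have : K.card = Fintype.card V - S.card := by
      rw [hK, Finset.card_sdiff_of_subset (Finset.subset_univ _), Finset.card_univ]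
    omega
  exact le_trans hKcard (SimpleGraph.IsClique.card_le_cliqueNum (tc := hclique))

lemma chrom_eq {V : Type} (G : SimpleGraph V) {m : ℕ} (hm : 1 ≤ m)
    (h1 : G.Colorable m) (h2 : ¬G.Colorable (m - 1)) :
    G.chromaticNumber = (m : ℕ∞) := by
  have hle : G.chromaticNumber ≤ (m : ℕ∞) := h1.chromaticNumber_le
  have hne : G.chromaticNumber ≠ ⊤ := (lt_of_le_of_lt hle (WithTop.coe_lt_top m)).ne
  set c := ENat.toNat G.chromaticNumber with hc
  have hcoe : G.chromaticNumber = (c : ℕ∞) := (ENat.coe_toNat hne).symm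
  have hcm : c ≤ m := by
    rw [hcoe, Nat.cast_le] at hle; exact hle
  have hcol : G.Colorable c := SimpleGraph.colorable_chromaticNumber h1
  have : ¬ c ≤ m - 1 := fun h => h2 (hcol.mono h)
  have : c = m := by omega
  rw [hcoe, this]

/-- cyclic adjacency on the first 7 naturals -/
def cyc (i j : ℕ) : Prop := i < 7 ∧ j < 7 ∧ ((i + 1) % 7 = j ∨ (j + 1) % 7 = i)

instance cyc.decidable (i j : ℕ) : Decidable (cyc i j) := by unfold cyc; infer_instance

/-- K_n minus the edges of a 7-cycle on the first 7 vertices -/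
def exG (n : ℕ) : SimpleGraph (Fin n) where
  Adj u v := u ≠ v ∧ ¬ cyc u.val v.val
  symm := by
    constructor
    intro u v ⟨h1, h2⟩
    exact ⟨h1.symm, fun ⟨c1, c2, c3⟩ => h2 ⟨c2, c1, c3.symm⟩⟩
  loopless := ⟨fun u h => h.1 rfl⟩

lemma exG_not_adj {n : ℕ} {u v : Fin n} (h : u ≠ v) (h2 : ¬ (exG n).Adj u v) :
    cyc u.val v.val := by
  by_contra hc
  exact h2 ⟨h, hc⟩

lemma cyc_no_triangle {i j k : ℕ} (h1 : cyc i j) (h2 : cyc j k) (h3 : cyc i k)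
    (hij : i ≠ j) (hik : i ≠ k) (hjk : j ≠ k) : False := by
  unfold cyc at h1 h2 h3
  omega

lemma cyc_no_indep4_fin : ∀ a b c d : Fin 7,
    ¬(a ≠ b ∧ a ≠ c ∧ a ≠ d ∧ b ≠ c ∧ b ≠ d ∧ c ≠ d ∧
      ¬ cyc a.val b.val ∧ ¬ cyc a.val c.val ∧ ¬ cyc a.val d.val ∧ ¬ cyc b.val c.val ∧
      ¬ cyc b.val d.val ∧ ¬ cyc c.val d.val) := by decide

lemma cyc_no_indep4 {a b c d : ℕ} (ha : a < 7) (hb : b < 7) (hc : c < 7) (hd : d < 7)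
    (hab : a ≠ b) (hac : a ≠ c) (had : a ≠ d) (hbc : b ≠ c) (hbd : b ≠ d) (hcd : c ≠ d)
    (n1 : ¬ cyc a b) (n2 : ¬ cyc a c) (n3 : ¬ cyc a d) (n4 : ¬ cyc b c) (n5 : ¬ cyc b d)
    (n6 : ¬ cyc c d) : False :=
  cyc_no_indep4_fin ⟨a, ha⟩ ⟨b, hb⟩ ⟨c, hc⟩ ⟨d, hd⟩
    ⟨fun h => hab (congrArg Fin.val h), fun h => hac (congrArg Fin.val h),
     fun h => had (congrArg Fin.val h), fun h => hbc (congrArg Fin.val h),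
     fun h => hbd (congrArg Fin.val h), fun h => hcd (congrArg Fin.val h),
     n1, n2, n3, n4, n5, n6⟩

lemma cyc_symm {i j : ℕ} (h : cyc i j) : cyc j i := ⟨h.2.1, h.1, h.2.2.symm⟩

lemma exG_pair_indep {n : ℕ} {a b : Fin n} (hab : a ≠ b) (hc : cyc a.val b.val) :
    ∀ u ∈ ({a, b} : Finset (Fin n)), ∀ v ∈ ({a, b} : Finset (Fin n)), ¬(exG n).Adj u v := by
  intro u hu v hv hadj
  simp only [Finset.mem_insert, Finset.mem_singleton] at hu hv
  rcases hu with rfl | rfl <;> rcases hv with rfl | rfl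
  · exact hadj.1 rfl
  · exact hadj.2 hc
  · exact hadj.2 (cyc_symm hc)
  · exact hadj.1 rfl

lemma ex_colorable (n : ℕ) (hn : 10 ≤ n) : (exG n).Colorable (n - 3) := by
  have h7 : (7 : ℕ) ≤ n := by omega
  set v0 : Fin n := ⟨0, by omega⟩
  set v1 : Fin n := ⟨1, by omega⟩
  set v2 : Fin n := ⟨2, by omega⟩
  set v3 : Fin n := ⟨3, by omega⟩
  set v4 : Fin n := ⟨4, by omega⟩
  set v5 : Fin n := ⟨5, by omega⟩
  have n01 : v0 ≠ v1 := Fin.ne_of_val_ne (by norm_num)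
  have n23 : v2 ≠ v3 := Fin.ne_of_val_ne (by norm_num)
  have n45 : v4 ≠ v5 := Fin.ne_of_val_ne (by norm_num)
  have key := key3 (exG n) 3 {v0, v1} {v2, v3} {v4, v5}
    (pd_disj ⟨Fin.ne_of_val_ne (by norm_num), Fin.ne_of_val_ne (by norm_num),
      Fin.ne_of_val_ne (by norm_num), Fin.ne_of_val_ne (by norm_num)⟩)
    (pd_disj ⟨Fin.ne_of_val_ne (by norm_num), Fin.ne_of_val_ne (by norm_num),
      Fin.ne_of_val_ne (by norm_num), Fin.ne_of_val_ne (by norm_num)⟩)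
    (pd_disj ⟨Fin.ne_of_val_ne (by norm_num), Fin.ne_of_val_ne (by norm_num),
      Fin.ne_of_val_ne (by norm_num), Fin.ne_of_val_ne (by norm_num)⟩)
    (Finset.insert_nonempty _ _) (Finset.insert_nonempty _ _) (Finset.insert_nonempty _ _)
    (exG_pair_indep n01 (by exact ⟨by norm_num, by norm_num, by norm_num⟩))
    (exG_pair_indep n23 (by exact ⟨by norm_num, by norm_num, by norm_num⟩))
    (exG_pair_indep n45 (by exact ⟨by norm_num, by norm_num, by norm_num⟩))
    (by rw [Finset.card_pair n01, Finset.card_pair n23, Finset.card_pair n45])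
  rwa [Fintype.card_fin] at key

lemma ex_not_colorable (n : ℕ) (hn : 10 ≤ n) : ¬ (exG n).Colorable (n - 4) := by
  rintro ⟨C⟩
  classical
  set F : Fin (n - 4) → Finset (Fin n) := fun c => Finset.univ.filter fun v => C v = c with hF
  have hsame : ∀ c, ∀ u ∈ F c, ∀ v ∈ F c, u ≠ v → cyc u.val v.val := by
    intro c u hu v hv huv
    simp only [hF, Finset.mem_filter] at hu hv
    refine exG_not_adj huv (fun hadj => ?_)
    exact C.valid hadj (hu.2.trans hv.2.symm)
  have hsum : ∑ c, (F c).card = n := by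
    have h := Finset.card_eq_sum_card_fiberwise
      (f := C) (s := Finset.univ) (t := Finset.univ) (fun x _ => Finset.mem_univ (C x))
    rw [Finset.card_univ, Fintype.card_fin] at h
    exact h.symm
  have hfib2 : ∀ c, (F c).card ≤ 2 := by
    intro c
    by_contra h
    push_neg at h
    rw [Finset.two_lt_card_iff] at h
    obtain ⟨a, b, d, ha, hb, hd, hab, had, hbd⟩ := h
    have c1 := hsame c a ha b hb hab
    have c2 := hsame c b hb d hd hbd
    have c3 := hsame c a ha d hd had
    exact cyc_no_triangle c1 c2 c3 (fun h => hab (Fin.ext h)) (fun h => had (Fin.ext h))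
      (fun h => hbd (Fin.ext h))
  have hfib7 : ∀ c, (F c).card = 2 → ∀ v ∈ F c, v.val < 7 := by
    intro c hc v hv
    obtain ⟨u, hu, huv⟩ := Finset.exists_mem_ne (by rw [hc]; norm_num) v
    exact (hsame c v hv u hu (Ne.symm huv)).1
  set T : Finset (Fin (n - 4)) := Finset.univ.filter (fun c => (F c).card = 2) with hT
  have hTbound : 2 * T.card ≤ 7 := by
    have hdisj : ∀ c ∈ T, ∀ d ∈ T, c ≠ d → Disjoint (F c) (F d) := by
      intro c _ d _ hcd
      rw [Finset.disjoint_left]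
      intro v hv hv'
      simp only [hF, Finset.mem_filter] at hv hv'
      exact hcd (hv.2.symm.trans hv'.2)
    have hcardU : (T.biUnion F).card = ∑ c ∈ T, (F c).card := Finset.card_biUnion hdisj
    have hsum2 : ∑ c ∈ T, (F c).card = 2 * T.card := by
      rw [Finset.sum_congr rfl (fun c hc => (Finset.mem_filter.mp hc).2)]
      rw [Finset.sum_const, smul_eq_mul, mul_comm]
    have hsub : T.biUnion F ⊆ Finset.univ.filter (fun v : Fin n => v.val < 7) := by
      intro v hv
      rw [Finset.mem_biUnion] at hv
      obtain ⟨c, hc, hvc⟩ := hv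
      exact Finset.mem_filter.mpr ⟨Finset.mem_univ _,
        hfib7 c (Finset.mem_filter.mp hc).2 v hvc⟩
    have h7 : (Finset.univ.filter (fun v : Fin n => v.val < 7)).card ≤ 7 := by
      have := Finset.card_le_card_of_injOn
        (s := Finset.univ.filter (fun v : Fin n => v.val < 7)) (t := Finset.range 7)
        (fun v : Fin n => v.val)
        (fun v hv => Finset.mem_range.mpr (Finset.mem_filter.mp hv).2)
        (fun u _ v _ h => Fin.ext h)
      rwa [Finset.card_range] at this
    calc 2 * T.card = ∑ c ∈ T, (F c).card := hsum2.symm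
      _ = (T.biUnion F).card := hcardU.symm
      _ ≤ _ := Finset.card_le_card hsub
      _ ≤ 7 := h7
  have hsplit : ∑ c ∈ T, (F c).card + ∑ c ∈ Finset.univ.filter (fun c => ¬((F c).card = 2)), (F c).card
      = ∑ c, (F c).card := Finset.sum_filter_add_sum_filter_not _ _ _
  have hrest : ∑ c ∈ Finset.univ.filter (fun c => ¬((F c).card = 2)), (F c).card
      ≤ (Finset.univ.filter (fun c => ¬((F c).card = 2))).card * 1 := by
    refine Finset.sum_le_card_nsmul _ _ 1 ?_
    intro c hc
    have := hfib2 c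
    have h2 := (Finset.mem_filter.mp hc).2
    omega
  have hcards : T.card + (Finset.univ.filter (fun c => ¬((F c).card = 2))).card = n - 4 := by
    have := Finset.card_filter_add_card_filter_not
      (s := Finset.univ) (p := fun c : Fin (n - 4) => (F c).card = 2)
    rwa [Finset.card_univ, Fintype.card_fin] at this
  have hsum2 : ∑ c ∈ T, (F c).card = 2 * T.card := by
    rw [Finset.sum_congr rfl (fun c hc => (Finset.mem_filter.mp hc).2)]
    rw [Finset.sum_const, smul_eq_mul, mul_comm]
  omega

lemma ex_cliqueNum (n : ℕ) (hn : 10 ≤ n) : (exG n).cliqueNum = n - 4 := by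
  classical
  have h7 : (7 : ℕ) ≤ n := by omega
  -- upper bound
  obtain ⟨s, hs⟩ := (exG n).exists_isNClique_cliqueNum
  have hupper : (exG n).cliqueNum ≤ n - 4 := by
    rw [← hs.2]
    set A : Finset (Fin n) := s.filter (fun v => v.val < 7) with hA
    set B : Finset (Fin n) := s.filter (fun v => ¬ v.val < 7) with hB
    have hsplit : A.card + B.card = s.card :=
      Finset.card_filter_add_card_filter_not (s := s) (p := fun v => v.val < 7)
    have hAcard : A.card ≤ 3 := by
      by_contra h
      push_neg at h
      obtain ⟨a, ha⟩ : A.Nonempty := Finset.card_pos.mp (by omega)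
      have herase : 2 < (A.erase a).card := by
        rw [Finset.card_erase_of_mem ha]; omega
      rw [Finset.two_lt_card_iff] at herase
      obtain ⟨b, c, d, hb, hc, hd, hbc, hbd, hcd⟩ := herase
      have hba := (Finset.mem_erase.mp hb).1
      have hca := (Finset.mem_erase.mp hc).1
      have hda := (Finset.mem_erase.mp hd).1
      have hb' := (Finset.mem_erase.mp hb).2
      have hc' := (Finset.mem_erase.mp hc).2
      have hd' := (Finset.mem_erase.mp hd).2
      have hmem : ∀ v ∈ A, v ∈ s ∧ v.val < 7 := fun v hv => Finset.mem_filter.mp hv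
      have adj : ∀ u ∈ A, ∀ v ∈ A, u ≠ v → ¬ cyc u.val v.val := by
        intro u hu v hv huv
        exact (hs.1 (hmem u hu).1 (hmem v hv).1 huv).2
      exact cyc_no_indep4 (hmem a ha).2 (hmem b hb').2 (hmem c hc').2 (hmem d hd').2
        (fun h => hba (Fin.ext h.symm)) (fun h => hca (Fin.ext h.symm))
        (fun h => hda (Fin.ext h.symm)) (fun h => hbc (Fin.ext h))
        (fun h => hbd (Fin.ext h)) (fun h => hcd (Fin.ext h))
        (adj a ha b hb' (Ne.symm hba)) (adj a ha c hc' (Ne.symm hca))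
        (adj a ha d hd' (Ne.symm hda)) (adj b hb' c hc' hbc)
        (adj b hb' d hd' hbd) (adj c hc' d hd' hcd)
    have hBcard : B.card ≤ n - 7 := by
      have hsub : B ⊆ Finset.univ.filter (fun v : Fin n => ¬ v.val < 7) := by
        intro v hv
        exact Finset.mem_filter.mpr ⟨Finset.mem_univ _, (Finset.mem_filter.mp hv).2⟩
      have hfull : (Finset.univ.filter (fun v : Fin n => v.val < 7)).card
          + (Finset.univ.filter (fun v : Fin n => ¬ v.val < 7)).card = n := by
        have := Finset.card_filter_add_card_filter_not
          (s := (Finset.univ : Finset (Fin n))) (p := fun v : Fin n => v.val < 7)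
        rwa [Finset.card_univ, Fintype.card_fin] at this
      have h7eq : (Finset.univ.filter (fun v : Fin n => v.val < 7)).card = 7 := by
        have hmap : Finset.univ.filter (fun v : Fin n => v.val < 7)
            = Finset.map (Fin.castLEEmb h7) Finset.univ := by
          ext v
          constructor
          · intro hv
            have h := (Finset.mem_filter.mp hv).2
            exact Finset.mem_map.mpr ⟨⟨v.val, h⟩, Finset.mem_univ _, Fin.ext rfl⟩
          · intro hv
            obtain ⟨u, -, rfl⟩ := Finset.mem_map.mp hv
            exact Finset.mem_filter.mpr ⟨Finset.mem_univ _, u.isLt⟩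
        rw [hmap, Finset.card_map, Finset.card_univ, Fintype.card_fin]
      have := Finset.card_le_card hsub
      omega
    omega
  -- lower bound
  have hlower : n - 4 ≤ (exG n).cliqueNum := by
    set D : Finset (Fin n) := {⟨1, by omega⟩, ⟨3, by omega⟩, ⟨5, by omega⟩, ⟨6, by omega⟩}
      with hD
    set K : Finset (Fin n) := Finset.univ \ D with hK
    have hval : ∀ v : Fin n, v ∈ K → v.val ≠ 1 ∧ v.val ≠ 3 ∧ v.val ≠ 5 ∧ v.val ≠ 6 := by
      intro v hv
      simp only [hK, hD, Finset.mem_sdiff, Finset.mem_univ, true_and, Finset.mem_insert,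
        Finset.mem_singleton, not_or] at hv
      exact ⟨fun h => hv.1 (Fin.ext h), fun h => hv.2.1 (Fin.ext h),
        fun h => hv.2.2.1 (Fin.ext h), fun h => hv.2.2.2 (Fin.ext h)⟩
    have hclique : (exG n).IsClique ↑K := by
      intro u hu v hv huv
      refine ⟨huv, fun hcyc => ?_⟩
      have h1 := hval u (by exact_mod_cast hu)
      have h2 := hval v (by exact_mod_cast hv)
      unfold cyc at hcyc
      omega
    have hDcard : D.card = 4 := by
      rw [hD]
      rw [Finset.card_insert_of_notMem (by simp [Fin.ext_iff]),
        Finset.card_insert_of_notMem (by simp [Fin.ext_iff]),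
        Finset.card_insert_of_notMem (by simp [Fin.ext_iff]), Finset.card_singleton]
    have hKcard : K.card = n - 4 := by
      rw [hK, Finset.card_sdiff_of_subset (Finset.subset_univ _), Finset.card_univ, Fintype.card_fin,
        hDcard]
    calc n - 4 = K.card := hKcard.symm
      _ ≤ (exG n).cliqueNum := SimpleGraph.IsClique.card_le_cliqueNum (tc := hclique)
  omega

theorem stmt_6 (n : ℕ) (hn : 10 ≤ n) :
    (∀ {V : Type} [Fintype V] (G : SimpleGraph V), Fintype.card V = n →
      G.chromaticNumber = ((n - 3 : ℕ) : ℕ∞) → n - 4 ≤ G.cliqueNum) ∧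
    (∃ G : SimpleGraph (Fin n),
      G.chromaticNumber = ((n - 3 : ℕ) : ℕ∞) ∧ G.cliqueNum = n - 4) := by
  constructor
  · intro V _ G hcard hchrom
    have hnc : ¬ G.Colorable (n - 4) := by
      intro hc
      have hle := hc.chromaticNumber_le
      rw [hchrom, Nat.cast_le] at hle
      omega
    have hkey := clique_of_not_colorable G (by rw [hcard]; exact hnc)
    rwa [hcard] at hkey
  · refine ⟨exG n, ?_, ex_cliqueNum n hn⟩
    refine chrom_eq (exG n) (by omega) (ex_colorable n hn) ?_
    have h : n - 3 - 1 = n - 4 := by omega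
    rw [h]
    exact ex_not_colorable n hn
end

section
/- Let G be a graph on n vertices with χ(G) = n - k for some k, and fix a proper coloring of G with n - k colors. If at least n - 2k + 2 of the color classes are singletons, then ω(G) ≥ n - 2k + 3. -/
open SimpleGraph Set Function

theorem stmt_7 {V : Type*} [Fintype V] (G : SimpleGraph V) (n k : ℕ)
    (hn : Fintype.card V = n) (h : G.chromaticNumber = ((n - k : ℕ) : ℕ∞))
    (C : G.Coloring (Fin (n - k)))
    (hsing : n - 2 * k + 2 ≤ {c : Fin (n - k) | {v : V | C v = c}.ncard = 1}.ncard) :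
    n - 2 * k + 3 ≤ G.cliqueNum := by
  classical
  -- every (n-k)-coloring is surjective since χ(G) = n-k
  have hsurj : ∀ D : G.Coloring (Fin (n - k)), Surjective D :=
    SimpleGraph.le_chromaticNumber_iff_forall_surjective.mp h.ge
  set T : Set (Fin (n - k)) := {c | {v : V | C v = c}.ncard = 1} with hT
  set S : Set V := {v | C v ∈ T} with hS
  -- the class of a vertex in a singleton class is exactly that vertex
  have hmemS : ∀ v ∈ S, {w : V | C w = C v} = {v} := by
    intro v hv
    obtain ⟨a, ha⟩ := Set.ncard_eq_one.mp hv
    have hva : v ∈ ({a} : Set V) := ha ▸ (rfl : v ∈ {w : V | C w = C v})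
    rw [Set.mem_singleton_iff] at hva
    rw [ha, hva]
  -- the vertices in singleton classes form a clique
  have hSclique : G.IsClique S := by
    intro u hu v hv huv
    by_contra hadj
    have hcu : {w : V | C w = C u} = {u} := hmemS u hu
    have hcv : {w : V | C w = C v} = {v} := hmemS v hv
    have hne : C u ≠ C v := by
      intro hcc
      have : v ∈ {w : V | C w = C u} := by simpa using hcc.symm
      rw [hcu, Set.mem_singleton_iff] at this
      exact huv this.symm
    -- merge the two singleton classes: recolor u's class with v's color
    let D : G.Coloring (Fin (n - k)) := SimpleGraph.Coloring.mk
      (fun w => if C w = C u then C v else C w) (by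
        intro a b hab heq
        by_cases ha : C a = C u <;> by_cases hb : C b = C u <;>
          simp only [ha, hb, if_pos, if_neg, if_true, if_false] at heq
        · exact C.valid hab (ha.trans hb.symm)
        · -- C v = C b, so b = v, and a = u, contradicting ¬Adj u v
          have hbv : b ∈ {w : V | C w = C v} := heq.symm
          rw [hcv, Set.mem_singleton_iff] at hbv
          have hau : a ∈ {w : V | C w = C u} := ha
          rw [hcu, Set.mem_singleton_iff] at hau
          exact hadj (hau ▸ hbv ▸ hab)
        · have hav : a ∈ {w : V | C w = C v} := heq
          rw [hcv, Set.mem_singleton_iff] at hav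
          have hbu : b ∈ {w : V | C w = C u} := hb
          rw [hcu, Set.mem_singleton_iff] at hbu
          exact hadj (hav ▸ hbu ▸ hab.symm)
        · exact C.valid hab heq)
    obtain ⟨w, hw⟩ := hsurj D (C u)
    have hw' : (if C w = C u then C v else C w) = C u := hw
    by_cases hwu : C w = C u
    · rw [if_pos hwu] at hw'; exact hne hw'.symm
    · rw [if_neg hwu] at hw'; exact hwu hw'
  by_cases hTuniv : T = Set.univ
  · -- all classes are singletons: C is a bijection, so n = n - k; contradiction
    exfalso
    have hinj : Injective C := by
      intro a b hab
      have ha : {w : V | C w = C a} = {a} := hmemS a (by simp [hS, hTuniv])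
      have hb : b ∈ {w : V | C w = C a} := by simpa using hab.symm
      rw [ha, Set.mem_singleton_iff] at hb
      exact hb.symm
    have hcard : Fintype.card V = n - k := by
      rw [← Fintype.card_fin (n - k)]
      exact Fintype.card_of_bijective ⟨hinj, hsurj C⟩
    have hTle : T.ncard ≤ n - k := by
      have := Set.ncard_le_ncard (Set.subset_univ T) (Set.finite_univ)
      rwa [Set.ncard_univ, Nat.card_eq_fintype_card, Fintype.card_fin] at this
    omega
  · obtain ⟨c0, hc0⟩ : ∃ c0 : Fin (n - k), c0 ∉ T := by
      by_contra hc
      push_neg at hc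
      exact hTuniv (Set.eq_univ_of_forall hc)
    by_cases hA : ∃ w : V, C w = c0 ∧ ∀ u ∈ S, G.Adj w u
    · -- a vertex adjacent to all singleton vertices: clique of size S.ncard + 1
      obtain ⟨w, hwc, hwadj⟩ := hA
      have hwS : w ∉ S := by
        intro hw
        exact hc0 (hwc ▸ hw)
      have hclique : G.IsClique (insert w S) :=
        hSclique.insert (fun b hb _ => hwadj b hb)
      have hfin : (insert w S).Finite := Set.toFinite _
      have hcard1 : (insert w S).ncard = S.ncard + 1 :=
        Set.ncard_insert_of_notMem hwS (Set.toFinite S)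
      -- T.ncard ≤ S.ncard via the map sending a singleton class to its vertex
      have hTS : T.ncard ≤ S.ncard := by
        have hTne : T.Nonempty := Set.nonempty_of_ncard_ne_zero (by omega)
        obtain ⟨ct, hct⟩ := hTne
        obtain ⟨v0, hv0⟩ := Set.ncard_eq_one.mp hct
        have hchoose : ∀ c : Fin (n - k), ∃ a : V, c ∈ T → {v : V | C v = c} = {a} := by
          intro c
          by_cases hc : c ∈ T
          · obtain ⟨a, ha⟩ := Set.ncard_eq_one.mp hc
            exact ⟨a, fun _ => ha⟩
          · exact ⟨v0, fun hcc => absurd hcc hc⟩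
        choose f hf using hchoose
        have hfC : ∀ c ∈ T, C (f c) = c := by
          intro c hc
          have : f c ∈ {v : V | C v = c} := by rw [hf c hc]; rfl
          exact this
        refine Set.ncard_le_ncard_of_injOn f (fun c hc => ?_) (fun c hc c' hc' hcc => ?_)
          (Set.toFinite S)
        · -- f c ∈ S
          have : {v : V | C v = C (f c)} = {v : V | C v = c} := by rw [hfC c hc]
          show C (f c) ∈ T
          rw [hT]
          simp only [Set.mem_setOf_eq]
          rw [this]
          exact hc
        · rw [← hfC c hc, ← hfC c' hc', hcc]
      have hle : hfin.toFinset.card ≤ G.cliqueNum := by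
        refine SimpleGraph.IsClique.card_le_cliqueNum (t := hfin.toFinset)
          (tc := ?_)
        rwa [Set.Finite.coe_toFinset]
      rw [← Set.ncard_eq_toFinset_card _ hfin] at hle
      omega
    · -- every vertex of class c0 has a non-neighbor in S: eliminate class c0
      exfalso
      push_neg at hA
      have hB : ∀ w : V, ∃ u : V, C w = c0 → u ∈ S ∧ ¬ G.Adj w u := by
        intro w
        by_cases hw : C w = c0
        · obtain ⟨u, hu, hadj⟩ := hA w hw
          exact ⟨u, fun _ => ⟨hu, hadj⟩⟩
        · exact ⟨w, fun hc => absurd hc hw⟩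
      choose g hg using hB
      let D : G.Coloring (Fin (n - k)) := SimpleGraph.Coloring.mk
        (fun w => if C w = c0 then C (g w) else C w) (by
          intro a b hab heq
          by_cases ha : C a = c0 <;> by_cases hb : C b = c0 <;>
            simp only [ha, hb, if_pos, if_neg, if_true, if_false] at heq
          · exact C.valid hab (ha.trans hb.symm)
          · -- C (g a) = C b with g a ∈ S singleton, so b = g a, adjacent to a: contra
            obtain ⟨hgS, hgadj⟩ := hg a ha
            have hcls : {w : V | C w = C (g a)} = {g a} := hmemS _ hgS
            have : b ∈ {w : V | C w = C (g a)} := by simpa using heq.symm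
            rw [hcls, Set.mem_singleton_iff] at this
            exact hgadj (this ▸ hab)
          · obtain ⟨hgS, hgadj⟩ := hg b hb
            have hcls : {w : V | C w = C (g b)} = {g b} := hmemS _ hgS
            have : a ∈ {w : V | C w = C (g b)} := by simpa using heq
            rw [hcls, Set.mem_singleton_iff] at this
            exact hgadj (this ▸ hab.symm)
          · exact C.valid hab heq)
      obtain ⟨w, hw⟩ := hsurj D c0
      have hw' : (if C w = c0 then C (g w) else C w) = c0 := hw
      by_cases hwc : C w = c0
      · rw [if_pos hwc] at hw'
        obtain ⟨hgS, _⟩ := hg w hwc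
        exact hc0 (hw' ▸ hgS)
      · rw [if_neg hwc] at hw'
        exact hwc hw'
end

section
/- Let G be a graph with an optimal proper coloring using χ(G) colors, and let Q be the union of all singleton color classes. Then every color class C with |C| ≥ 2 contains a vertex adjacent to all vertices of Q, or else G admits a proper coloring with fewer than χ(G) colors. -/
theorem stmt_9 {V : Type*} [Fintype V] (G : SimpleGraph V) {α : Type*} [Fintype α]
    (C : G.Coloring α) (hopt : (Fintype.card α : ℕ∞) = G.chromaticNumber)
    (Q : Set V) (hQ : Q = {v : V | ∀ w : V, C w = C v → w = v})
    (c : α) (hc : 2 ≤ {v : V | C v = c}.ncard) :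
    ∃ v : V, C v = c ∧ ∀ q ∈ Q, G.Adj v q := by
  by_contra h
  push_neg at h
  have hcne : ∀ q ∈ Q, C q ≠ c := by
    intro q hq hqc
    have hsingle : {v : V | C v = c} = {q} := by
      ext w
      simp only [Set.mem_setOf_eq, Set.mem_singleton_iff]
      constructor
      · intro hw
        exact (hQ ▸ hq) w (hw.trans hqc.symm)
      · rintro rfl; exact hqc
    rw [hsingle, Set.ncard_singleton] at hc
    omega
  choose q hqQ hqAdj using h
  classical
  let C' : V → {a : α // a ≠ c} := fun v =>
    if hv : C v = c then ⟨C (q v hv), hcne _ (hqQ v hv)⟩ else ⟨C v, hv⟩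
  have hproper : ∀ {v w : V}, G.Adj v w → C' v ≠ C' w := by
    intro v w hadj heq
    by_cases hv : C v = c <;> by_cases hw : C w = c
    · exact C.valid hadj (hv.trans hw.symm)
    · simp only [C', dif_pos hv, dif_neg hw, Subtype.mk.injEq] at heq
      have : w = q v hv := (hQ ▸ hqQ v hv) w heq.symm
      exact hqAdj v hv (this ▸ hadj)
    · simp only [C', dif_neg hv, dif_pos hw, Subtype.mk.injEq] at heq
      have : v = q w hw := (hQ ▸ hqQ w hw) v heq
      exact hqAdj w hw (this ▸ hadj.symm)
    · simp only [C', dif_neg hv, dif_neg hw, Subtype.mk.injEq] at heq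
      exact C.valid hadj heq
  let col : G.Coloring {a : α // a ≠ c} := SimpleGraph.Coloring.mk C' hproper
  have hle : G.chromaticNumber ≤ Fintype.card {a : α // a ≠ c} :=
    col.colorable.chromaticNumber_le
  rw [← hopt] at hle
  have hcard : Fintype.card {a : α // a ≠ c} = Fintype.card α - 1 := by
    simp [Fintype.card_subtype_compl (fun a => a = c)]
  rw [hcard] at hle
  have hpos : 1 ≤ Fintype.card α := Fintype.card_pos_iff.mpr ⟨c⟩
  have := (Nat.cast_le (α := ℕ∞)).mp hle
  omega
end

section
/- For every even k = 2r with r ≥ 1, the complement of the disjoint union of r copies of C_5 is a graph on n = 5r vertices with chromatic number n - k and clique number n - 2k + k/2 = n - 3k/2. -/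
open SimpleGraph Finset

private def f5 : Fin 5 → Fin 3 := ![0, 0, 1, 1, 2]

private lemma cyc5_tri_free : ∀ a b c : Fin 5, a ≠ b → a ≠ c → b ≠ c →
    ¬((SimpleGraph.cycleGraph 5).Adj a b ∧ (SimpleGraph.cycleGraph 5).Adj a c ∧
      (SimpleGraph.cycleGraph 5).Adj b c) := by decide

private lemma cyc5_no_indep3 : ∀ a b c : Fin 5, a ≠ b → a ≠ c → b ≠ c →
    ((SimpleGraph.cycleGraph 5).Adj a b ∨ (SimpleGraph.cycleGraph 5).Adj a c ∨
      (SimpleGraph.cycleGraph 5).Adj b c) := by decide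

private lemma f5_valid : ∀ a b : Fin 5, a ≠ b → ¬(SimpleGraph.cycleGraph 5).Adj a b →
    f5 a ≠ f5 b := by decide

private lemma cyc5_02 : ∀ a b : Fin 5, a ∈ ({0, 2} : Finset (Fin 5)) →
    b ∈ ({0, 2} : Finset (Fin 5)) → ¬(SimpleGraph.cycleGraph 5).Adj a b := by decide

theorem stmt_13 (r : ℕ) (hr : 1 ≤ r) (H : SimpleGraph (Fin r × Fin 5))
    (hH : ∀ p q : Fin r × Fin 5,
      H.Adj p q ↔ p.1 = q.1 ∧ (SimpleGraph.cycleGraph 5).Adj p.2 q.2) :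
    Fintype.card (Fin r × Fin 5) = 5 * r ∧
    (Hᶜ).chromaticNumber = ((5 * r - 2 * r : ℕ) : ℕ∞) ∧
    (Hᶜ).cliqueNum = 5 * r - 2 * (2 * r) + (2 * r) / 2 := by
  classical
  refine ⟨by simp [Fintype.card_prod, mul_comm], ?_, ?_⟩
  · -- chromatic number
    have h3 : 5 * r - 2 * r = 3 * r := by omega
    rw [h3]
    -- upper bound: explicit coloring
    have C0 : (Hᶜ).Coloring (Fin r × Fin 3) := by
      refine SimpleGraph.Coloring.mk (fun p => (p.1, f5 p.2)) ?_
      intro p q hadj heq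
      rw [compl_adj, hH] at hadj
      obtain ⟨hne, hnadj⟩ := hadj
      rw [Prod.ext_iff] at heq
      obtain ⟨h1, h2⟩ := heq
      have hs : p.2 ≠ q.2 := fun h => hne (Prod.ext h1 h)
      exact f5_valid p.2 q.2 hs (fun h => hnadj ⟨h1, h⟩) h2
    have hcol : (Hᶜ).Colorable (3 * r) := by
      have := C0.colorable
      rwa [Fintype.card_prod, Fintype.card_fin, Fintype.card_fin, mul_comm] at this
    have hupper := hcol.chromaticNumber_le
    -- lower bound
    have key : ∀ n : ℕ, (Hᶜ).Colorable n → 3 * r ≤ n := by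
      intro n hc
      obtain ⟨C⟩ := hc
      set S : Fin r → Finset (Fin n) := fun i => image (fun j => C (i, j)) univ with hS
      have hcard : ∀ i : Fin r, 3 ≤ (S i).card := by
        intro i
        by_contra hlt
        push_neg at hlt
        have hmaps : ∀ j ∈ (univ : Finset (Fin 5)), C (i, j) ∈ S i := by
          intro j _; exact mem_image_of_mem _ (mem_univ j)
        have hlt' : (S i).card * 2 < (univ : Finset (Fin 5)).card := by
          simp only [card_univ, Fintype.card_fin]
          omega
        obtain ⟨y, _, hy⟩ := exists_lt_card_fiber_of_mul_lt_card_of_maps_to hmaps hlt'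
        rw [Finset.two_lt_card_iff] at hy
        obtain ⟨a, b, c, ha, hb, hc, hab, hac, hbc⟩ := hy
        simp only [mem_filter] at ha hb hc
        have adjpair : ∀ u v : Fin 5, u ≠ v → C (i, u) = C (i, v) →
            (SimpleGraph.cycleGraph 5).Adj u v := by
          intro u v huv hCuv
          by_contra hna
          exact C.valid (by
            rw [compl_adj, hH]
            exact ⟨fun h => huv (congrArg Prod.snd h), fun h => hna h.2⟩) hCuv
        exact cyc5_tri_free a b c hab hac hbc
          ⟨adjpair a b hab (ha.2.trans hb.2.symm),
           adjpair a c hac (ha.2.trans hc.2.symm),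
           adjpair b c hbc (hb.2.trans hc.2.symm)⟩
      have hdisj : ∀ i ∈ (univ : Finset (Fin r)), ∀ i' ∈ (univ : Finset (Fin r)),
          i ≠ i' → Disjoint (S i) (S i') := by
        intro i _ i' _ hii'
        rw [Finset.disjoint_left]
        intro x hx hx'
        simp only [hS, mem_image, mem_univ, true_and] at hx hx'
        obtain ⟨j, hj⟩ := hx
        obtain ⟨j', hj'⟩ := hx'
        refine C.valid (v := (i, j)) (w := (i', j')) ?_ (hj.trans hj'.symm)
        rw [compl_adj, hH]
        exact ⟨fun h => hii' (congrArg Prod.fst h), fun h => hii' h.1⟩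
      calc 3 * r = ∑ _i : Fin r, 3 := by simp [mul_comm]
        _ ≤ ∑ i : Fin r, (S i).card := Finset.sum_le_sum (fun i _ => hcard i)
        _ = ((univ : Finset (Fin r)).biUnion S).card := (Finset.card_biUnion hdisj).symm
        _ ≤ Fintype.card (Fin n) := Finset.card_le_card (Finset.subset_univ _) |>.trans
            (by simp)
        _ = n := Fintype.card_fin n
    have hne : (Hᶜ).chromaticNumber ≠ ⊤ := by
      intro h
      rw [h, top_le_iff] at hupper
      exact ENat.coe_ne_top (3 * r) hupper
    have hm := (Hᶜ).colorable_chromaticNumber_of_fintype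
    have hlow : 3 * r ≤ ENat.toNat (Hᶜ).chromaticNumber := key _ hm
    refine le_antisymm hupper ?_
    calc ((3 * r : ℕ) : ℕ∞) ≤ (ENat.toNat (Hᶜ).chromaticNumber : ℕ∞) := Nat.cast_le.mpr hlow
      _ = (Hᶜ).chromaticNumber := ENat.coe_toNat hne
  · -- clique number
    have h2 : 5 * r - 2 * (2 * r) + (2 * r) / 2 = 2 * r := by omega
    rw [h2]
    -- upper bound
    have hub : ∀ s : Finset (Fin r × Fin 5), (Hᶜ).IsClique s → s.card ≤ 2 * r := by
      intro s hs
      have := Finset.card_eq_sum_card_fiberwise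
        (f := Prod.fst) (s := s) (t := (univ : Finset (Fin r))) (fun x _ => mem_univ _)
      rw [this]
      have hfib : ∀ i : Fin r, (s.filter (fun p => p.1 = i)).card ≤ 2 := by
        intro i
        by_contra hlt
        push_neg at hlt
        rw [Finset.two_lt_card_iff] at hlt
        obtain ⟨a, b, c, ha, hb, hc, hab, hac, hbc⟩ := hlt
        simp only [mem_filter] at ha hb hc
        have pair : ∀ u v : Fin r × Fin 5, u ∈ s → v ∈ s → u ≠ v → u.1 = i → v.1 = i →
            ¬(SimpleGraph.cycleGraph 5).Adj u.2 v.2 ∧ u.2 ≠ v.2 := by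
          intro u v hu hv huv hui hvi
          have hadj := hs hu hv huv
          rw [compl_adj, hH] at hadj
          exact ⟨fun h => hadj.2 ⟨hui.trans hvi.symm, h⟩,
            fun h => huv (Prod.ext (hui.trans hvi.symm) h)⟩
        obtain ⟨nab, sab⟩ := pair a b ha.1 hb.1 hab ha.2 hb.2
        obtain ⟨nac, sac⟩ := pair a c ha.1 hc.1 hac ha.2 hc.2
        obtain ⟨nbc, sbc⟩ := pair b c hb.1 hc.1 hbc hb.2 hc.2
        rcases cyc5_no_indep3 a.2 b.2 c.2 sab sac sbc with h | h | h
        · exact nab h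
        · exact nac h
        · exact nbc h
      calc ∑ i : Fin r, (s.filter (fun p => p.1 = i)).card ≤ ∑ _i : Fin r, 2 :=
            Finset.sum_le_sum (fun i _ => hfib i)
        _ = 2 * r := by simp [mul_comm]
    -- lower bound: explicit clique
    have hclique : (Hᶜ).IsClique ((univ : Finset (Fin r)) ×ˢ ({0, 2} : Finset (Fin 5)) :
        Finset (Fin r × Fin 5)) := by
      intro p hp q hq hne
      simp only [coe_product, Set.mem_prod, coe_univ, Set.mem_univ, true_and, coe_insert,
        coe_singleton, Set.mem_insert_iff, Set.mem_singleton_iff] at hp hq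
      rw [compl_adj, hH]
      refine ⟨hne, fun h => ?_⟩
      have hp' : p.2 ∈ ({0, 2} : Finset (Fin 5)) := by
        simp only [mem_insert, mem_singleton]; exact hp
      have hq' : q.2 ∈ ({0, 2} : Finset (Fin 5)) := by
        simp only [mem_insert, mem_singleton]; exact hq
      exact cyc5_02 p.2 q.2 hp' hq' h.2
    have hlb := SimpleGraph.IsClique.card_le_cliqueNum (tc := hclique)
    have hcardlb : ((univ : Finset (Fin r)) ×ˢ ({0, 2} : Finset (Fin 5))).card = 2 * r := by
      rw [Finset.card_product]
      simp [mul_comm]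
    rw [hcardlb] at hlb
    refine le_antisymm ?_ hlb
    obtain ⟨t, ht⟩ := (Hᶜ).exists_isNClique_cliqueNum
    rw [← ht.card_eq]
    exact hub t ht.isClique
end

section
/- Let t ≥ 2. There exists a constant C = C(t) such that every graph G on n vertices with ω(G) < t satisfies χ(G) ≤ C · n^{(t-2)/(t-1)}. -/
open SimpleGraph Finset

lemma aux_induce_clique {V : Type} (G : SimpleGraph V) (p : Set V) {k : ℕ}
    {x : Finset p} (h : (G.induce p).IsNClique k x) :
    G.IsNClique k (x.map (Function.Embedding.subtype _)) := by
  obtain ⟨hc, hcard⟩ := h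
  constructor
  · rintro a ha b hb hab
    simp only [Finset.coe_map, Set.mem_image, Finset.mem_coe,
      Function.Embedding.coe_subtype] at ha hb
    obtain ⟨a', ha', rfl⟩ := ha
    obtain ⟨b', hb', rfl⟩ := hb
    have : a' ≠ b' := fun h => hab (by rw [h])
    exact hc ha' hb' this
  · simpa using hcard

lemma aux_induce_compl {V : Type} (G : SimpleGraph V) (p : Set V) :
    (G.induce p)ᶜ = Gᶜ.induce p := by
  ext a b
  simp only [compl_adj, comap_adj, Function.Embedding.coe_subtype, ne_eq, Subtype.ext_iff]

lemma aux_insert_clique {V : Type} [DecidableEq V] (G : SimpleGraph V) (p : Set V) (v : V)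
    (hv : ∀ u ∈ p, G.Adj v u) {k : ℕ} {x : Finset p}
    (h : (G.induce p).IsNClique k x) :
    G.IsNClique (k + 1) (insert v (x.map (Function.Embedding.subtype _))) := by
  classical
  have hx := aux_induce_clique G p h
  have hvmem : v ∉ x.map (Function.Embedding.subtype _) := by
    intro hmem
    simp only [Finset.mem_map, Function.Embedding.coe_subtype] at hmem
    obtain ⟨⟨u, hu⟩, _, rfl⟩ := hmem
    exact G.loopless.irrefl _ (hv _ hu)
  refine ⟨?_, by rw [Finset.card_insert_of_notMem hvmem, hx.2]⟩
  have hadj : ∀ b ∈ (x.map (Function.Embedding.subtype _) : Finset V), G.Adj v b := by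
    intro b hb
    simp only [Finset.mem_map, Function.Embedding.coe_subtype] at hb
    obtain ⟨⟨u, hu⟩, _, rfl⟩ := hb
    exact hv _ hu
  rintro a ha b hb hab
  simp only [Finset.coe_insert, Set.mem_insert_iff, Finset.mem_coe] at ha hb
  rcases ha with rfl | ha
  · rcases hb with rfl | hb
    · exact absurd rfl hab
    · exact hadj b hb
  · rcases hb with rfl | hb
    · exact (hadj a ha).symm
    · exact hx.1 ha hb hab

lemma aux_ramsey : ∀ (n : ℕ), ∀ (p q : ℕ) (V : Type) [Fintype V] (G : SimpleGraph V),
    Fintype.card V = n →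
    (¬ ∃ x : Finset V, G.IsNClique (p + 1) x) →
    (¬ ∃ x : Finset V, Gᶜ.IsNClique (q + 1) x) →
    n + 1 ≤ (p + q).choose p := by
  intro n
  induction n using Nat.strong_induction_on with
  | _ n IH =>
  intro p q V _ G hcard hG hGc
  classical
  rcases Nat.eq_zero_or_pos n with hn | hn
  · subst hn
    exact Nat.choose_pos (Nat.le_add_right p q)
  · have hne : Nonempty V := Fintype.card_pos_iff.mp (hcard ▸ hn)
    obtain ⟨v⟩ := hne
    rcases p with _ | p'
    · exact absurd ⟨{v}, isNClique_singleton.mpr rfl⟩ hG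
    rcases q with _ | q'
    · exact absurd ⟨{v}, isNClique_singleton.mpr rfl⟩ hGc
    set N : Set V := {u | G.Adj v u} with hN
    set M : Set V := {u | u ≠ v ∧ ¬ G.Adj v u} with hM
    have hdisj : Disjoint N.toFinset M.toFinset := by
      rw [Finset.disjoint_left]
      intro u hu hu'
      rw [Set.mem_toFinset] at hu hu'
      exact hu'.2 hu
    have hvnot : v ∉ N.toFinset ∪ M.toFinset := by
      simp [hN, hM]
    have huniv : (Finset.univ : Finset V) = insert v (N.toFinset ∪ M.toFinset) := by
      ext u
      simp only [Finset.mem_univ, Finset.mem_insert, Finset.mem_union, Set.mem_toFinset,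
        hN, hM, Set.mem_setOf_eq, true_iff]
      by_cases h : u = v
      · exact Or.inl h
      · by_cases h2 : G.Adj v u
        · exact Or.inr (Or.inl h2)
        · exact Or.inr (Or.inr ⟨h, h2⟩)
    have hcardsum : n = 1 + N.toFinset.card + M.toFinset.card := by
      rw [← hcard, ← Finset.card_univ, huniv, Finset.card_insert_of_notMem hvnot,
        Finset.card_union_of_disjoint hdisj]
      omega
    have hNcard : Fintype.card N = N.toFinset.card := (Set.toFinset_card N).symm
    have hMcard : Fintype.card M = M.toFinset.card := (Set.toFinset_card M).symm
    have hIHN := IH (Fintype.card N) (by omega) p' (q' + 1) N (G.induce N) rfl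
      (by
        rintro ⟨x, hx⟩
        exact hG ⟨_, aux_insert_clique G N v (fun u hu => hu) hx⟩)
      (by
        rintro ⟨x, hx⟩
        rw [aux_induce_compl] at hx
        exact hGc ⟨_, aux_induce_clique Gᶜ N hx⟩)
    have hIHM := IH (Fintype.card M) (by omega) (p' + 1) q' M (G.induce M) rfl
      (by
        rintro ⟨x, hx⟩
        exact hG ⟨_, aux_induce_clique G M hx⟩)
      (by
        rintro ⟨x, hx⟩
        rw [aux_induce_compl] at hx
        refine hGc ⟨_, aux_insert_clique Gᶜ M v (fun u hu => ?_) hx⟩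
        rw [SimpleGraph.compl_adj]
        exact ⟨fun h => hu.1 h.symm, hu.2⟩)
    have hpascal : (p' + 1 + (q' + 1)).choose (p' + 1)
        = (p' + (q' + 1)).choose p' + (p' + 1 + q').choose (p' + 1) := by
      have h1 : p' + 1 + (q' + 1) = (p' + q' + 1) + 1 := by omega
      have h2 : p' + (q' + 1) = p' + q' + 1 := by omega
      have h3 : p' + 1 + q' = p' + q' + 1 := by omega
      rw [h1, h2, h3, Nat.choose_succ_succ]
    omega
lemma aux_colorable_of_indep {V : Type} (G : SimpleGraph V) (S : Set V)
    (hS : ∀ u ∈ S, ∀ w ∈ S, ¬ G.Adj u w) {k : ℕ}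
    (h : (G.induce Sᶜ).Colorable k) : G.Colorable (k + 1) := by
  classical
  obtain ⟨c⟩ := h
  refine ⟨SimpleGraph.Coloring.mk
    (fun v => if hv : v ∈ S then Fin.last k else (c ⟨v, hv⟩).castSucc) ?_⟩
  intro u w huw
  by_cases hu : u ∈ S <;> by_cases hw : w ∈ S <;> simp only [hu, hw, dif_pos, dif_neg,
    not_false_eq_true]
  · exact (hS u hu w hw huw).elim
  · intro hcontra
    exact absurd hcontra.symm (Fin.castSucc_lt_last (c ⟨w, hw⟩)).ne
  · intro hcontra
    exact absurd hcontra (Fin.castSucc_lt_last (c ⟨u, hu⟩)).ne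
  · intro hcontra
    exact c.valid (by exact huw) (Fin.castSucc_injective k hcontra)
lemma aux_analytic (t : ℕ) (ht : 3 ≤ t) (n a : ℕ) (ha1 : 1 ≤ a) (han : a ≤ n)
    (hn : (n : ℝ) ≤ ((t : ℝ) + 1) ^ (t - 1) * (a : ℝ) ^ (t - 1)) :
    (((t:ℝ)+1)^(t-1) * ((t:ℝ)-1)) * (((n - a : ℕ) : ℝ)) ^ (((t:ℝ)-2)/((t:ℝ)-1)) + 1
      ≤ (((t:ℝ)+1)^(t-1) * ((t:ℝ)-1)) * ((n : ℝ)) ^ (((t:ℝ)-2)/((t:ℝ)-1)) := by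
  have hT : (3 : ℝ) ≤ (t : ℝ) := by exact_mod_cast ht
  set T : ℝ := (t : ℝ) with hTdef
  set c : ℝ := (T + 1) ^ (t - 1) with hcdef
  set γ : ℝ := (T - 2) / (T - 1) with hγdef
  have hT1 : (0:ℝ) < T - 1 := by linarith
  have hT2 : (0:ℝ) < T - 2 := by linarith
  have hc1 : (1:ℝ) ≤ c := one_le_pow₀ (by linarith)
  have hγ0 : 0 < γ := div_pos hT2 hT1
  have hγ1 : γ < 1 := (div_lt_one hT1).mpr (by linarith)
  have han' : (a:ℝ) ≤ (n:ℝ) := by exact_mod_cast han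
  have ha1' : (1:ℝ) ≤ (a:ℝ) := by exact_mod_cast ha1
  have hn1 : (1:ℝ) ≤ (n:ℝ) := le_trans ha1' han'
  have hn0 : (0:ℝ) < (n:ℝ) := by linarith
  have hnat : ((n - a : ℕ) : ℝ) = (n:ℝ) - (a:ℝ) := by
    push_cast [Nat.cast_sub han]; ring
  rw [hnat]
  set X : ℝ := (n:ℝ) ^ γ with hXdef
  set Y : ℝ := ((n:ℝ) - (a:ℝ)) ^ γ with hYdef
  set u : ℝ := γ * ((a:ℝ) / (n:ℝ)) with hudef
  have hX0 : 0 < X := Real.rpow_pos_of_pos hn0 γ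
  -- Bernoulli via weighted AM-GM
  have key1 : (((n:ℝ) - a) / n) ^ γ ≤ 1 - u := by
    have := Real.geom_mean_le_arith_mean2_weighted (w₁ := γ) (w₂ := 1 - γ)
      (p₁ := ((n:ℝ) - a) / n) (p₂ := 1) hγ0.le (by linarith)
      (div_nonneg (by linarith) hn0.le) zero_le_one (by ring)
    simp only [Real.one_rpow, mul_one] at this
    calc (((n:ℝ) - a) / n) ^ γ ≤ γ * (((n:ℝ) - a) / n) + (1 - γ) := this
      _ = 1 - u := by rw [hudef]; field_simp; ring
  have key2 : Y ≤ (1 - u) * X := by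
    have hrw : (n:ℝ) - a = (((n:ℝ) - a) / n) * n := by field_simp
    rw [hYdef, hrw, Real.mul_rpow (div_nonneg (by linarith) hn0.le) hn0.le]
    exact mul_le_mul_of_nonneg_right key1 (Real.rpow_nonneg hn0.le γ)
  -- key3 : 1 ≤ (c * (T-1)) * (u * X)
  have hexp : (1 - γ) * (T - 1) = 1 := by
    rw [hγdef]; field_simp; norm_num
  have hroot : (n:ℝ) ^ (1 - γ) ≤ c * a := by
    have hx0 : (0:ℝ) ≤ (n:ℝ) ^ (1 - γ) := Real.rpow_nonneg hn0.le _
    have hy0 : (0:ℝ) ≤ c * a := by positivity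
    have hpow : ((n:ℝ) ^ (1 - γ)) ^ (t - 1) ≤ (c * a) ^ (t - 1) := by
      have hl : ((n:ℝ) ^ (1 - γ)) ^ (t - 1) = (n : ℝ) := by
        rw [← Real.rpow_natCast ((n:ℝ) ^ (1 - γ)) (t - 1), ← Real.rpow_mul hn0.le]
        have : ((t - 1 : ℕ) : ℝ) = T - 1 := by
          rw [hTdef]; push_cast [Nat.cast_sub (by omega : 1 ≤ t)]; ring
        rw [this, hexp, Real.rpow_one]
      have hr : c * (a:ℝ) ^ (t - 1) ≤ (c * a) ^ (t - 1) := by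
        rw [mul_pow]
        refine mul_le_mul_of_nonneg_right ?_ (by positivity)
        exact le_self_pow₀ hc1 (by omega)
      rw [hl]
      exact le_trans hn hr
    exact le_of_pow_le_pow_left₀ (by omega) hy0 hpow
  have key3 : 1 ≤ (c * (T - 1)) * (u * X) := by
    have h1 : (n:ℝ) = X * (n:ℝ) ^ (1 - γ) := by
      rw [hXdef, ← Real.rpow_add hn0]
      norm_num
    have h2 : (n:ℝ) ^ (1 - γ) ≤ c * (T - 2) * a := by
      calc (n:ℝ) ^ (1 - γ) ≤ c * a := hroot
        _ ≤ c * (T - 2) * a := by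
          nlinarith [mul_nonneg (mul_nonneg (le_trans zero_le_one hc1)
            (le_trans zero_le_one ha1')) (by linarith : (0:ℝ) ≤ T - 3)]
    have h3 : (n:ℝ) ≤ X * (c * (T - 2) * a) := by
      rw [h1]
      exact mul_le_mul_of_nonneg_left h2 hX0.le
    have h4 : (c * (T - 1)) * (u * X) = (X * (c * (T - 2) * a)) / n := by
      rw [hudef, hγdef]
      field_simp
    rw [h4, le_div_iff₀ hn0]
    linarith
  have hD0 : (0:ℝ) ≤ c * (T - 1) := by positivity
  have h5 := mul_le_mul_of_nonneg_left key2 hD0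
  have h6 : (c * (T-1)) * ((1 - u) * X) + (c * (T-1)) * (u * X) = (c * (T-1)) * X := by ring
  calc c * (T - 1) * Y + 1 ≤ (c * (T-1)) * ((1 - u) * X) + (c * (T-1)) * (u * X) := by linarith
    _ = (c * (T-1)) * X := h6
lemma aux_main (t : ℕ) (ht : 3 ≤ t) : ∀ (n : ℕ) (V : Type) [Fintype V] (G : SimpleGraph V),
    Fintype.card V = n → (¬ ∃ x : Finset V, G.IsNClique t x) →
    G.Colorable ⌈(((t:ℝ)+1)^(t-1) * ((t:ℝ)-1)) * (n:ℝ) ^ (((t:ℝ)-2)/((t:ℝ)-1))⌉₊ := by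
  intro n
  induction n using Nat.strong_induction_on with
  | _ n IH =>
  intro V _ G hcard hG
  classical
  rcases Nat.eq_zero_or_pos n with hn | hn
  · have : IsEmpty V := Fintype.card_eq_zero_iff.mp (by omega)
    exact SimpleGraph.Colorable.of_isEmpty (G := G) _
  · have hne : Nonempty V := Fintype.card_pos_iff.mp (hcard ▸ hn)
    obtain ⟨v⟩ := hne
    set a := Gᶜ.cliqueNum with ha
    obtain ⟨S, hS⟩ := Gᶜ.exists_isNClique_cliqueNum
    have ha1 : 1 ≤ a := by
      have h1 : Gᶜ.IsNClique 1 {v} := isNClique_singleton.mpr rfl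
      have := IsClique.card_le_cliqueNum (tc := h1.1)
      simpa [ha] using this
    have hScard : S.card = a := hS.2
    have han : a ≤ n := by
      rw [← hScard, ← hcard]
      exact Finset.card_le_univ S
    have hGc : ¬ ∃ x : Finset V, Gᶜ.IsNClique (a + 1) x := by
      rintro ⟨x, hx⟩
      have h2 := IsClique.card_le_cliqueNum (tc := hx.1)
      rw [hx.2] at h2
      omega
    have hG' : ¬ ∃ x : Finset V, G.IsNClique (t - 1 + 1) x := by
      rw [Nat.sub_add_cancel (by omega : 1 ≤ t)]
      exact hG
    have hram := aux_ramsey n (t - 1) a V G hcard hG' hGc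
    have hb : n ≤ (t + 1) ^ (t - 1) * a ^ (t - 1) := by
      have h1 : (t - 1 + a).choose (t - 1) ≤ (t - 1 + a) ^ (t - 1) :=
        Nat.choose_le_pow _ _
      have h2 : (t - 1 + a) ^ (t - 1) ≤ ((t + 1) * a) ^ (t - 1) := by
        apply Nat.pow_le_pow_left
        have h3 : t ≤ t * a := Nat.le_mul_of_pos_right t ha1
        have h4 : (t + 1) * a = t * a + a := by ring
        omega
      calc n ≤ (t - 1 + a).choose (t - 1) := by omega
        _ ≤ (t - 1 + a) ^ (t - 1) := h1
        _ ≤ ((t + 1) * a) ^ (t - 1) := h2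
        _ = (t + 1) ^ (t - 1) * a ^ (t - 1) := Nat.mul_pow _ _ _
    have hnR : (n : ℝ) ≤ ((t:ℝ) + 1) ^ (t - 1) * (a:ℝ) ^ (t - 1) := by
      exact_mod_cast hb
    have hind : ∀ u ∈ (↑S : Set V), ∀ w ∈ (↑S : Set V), ¬ G.Adj u w := by
      intro u hu w hw hadj
      by_cases huw : u = w
      · exact G.loopless.irrefl u (huw ▸ hadj)
      · exact (hS.1 hu hw huw).2 hadj
    have hcardP : Fintype.card (↑S : Set V) = a := by
      simp only [Finset.coe_sort_coe, Fintype.card_coe]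
      exact hScard
    have hcardc : Fintype.card ↥((↑S : Set V)ᶜ) = n - a := by
      rw [Fintype.card_compl_set, hcardP, hcard]
    have hGi : ¬ ∃ x : Finset ↥((↑S : Set V)ᶜ), (G.induce (↑S : Set V)ᶜ).IsNClique t x := by
      rintro ⟨x, hx⟩
      exact hG ⟨_, aux_induce_clique G (↑S : Set V)ᶜ hx⟩
    have hcol := IH (n - a) (by omega) ↥((↑S : Set V)ᶜ) (G.induce (↑S : Set V)ᶜ) hcardc hGi
    have hcol2 := aux_colorable_of_indep G (↑S : Set V) hind hcol
    refine hcol2.mono ?_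
    have hana := aux_analytic t ht n a ha1 han hnR
    have h0 : 0 ≤ (((t:ℝ)+1)^(t-1) * ((t:ℝ)-1)) * ((n - a : ℕ):ℝ) ^ (((t:ℝ)-2)/((t:ℝ)-1)) := by
      have hT : (3:ℝ) ≤ (t:ℝ) := by exact_mod_cast ht
      have : (0:ℝ) ≤ ((t:ℝ) - 1) := by linarith
      positivity
    calc ⌈(((t:ℝ)+1)^(t-1) * ((t:ℝ)-1)) * ((n - a : ℕ):ℝ) ^ (((t:ℝ)-2)/((t:ℝ)-1))⌉₊ + 1
        = ⌈(((t:ℝ)+1)^(t-1) * ((t:ℝ)-1)) * ((n - a : ℕ):ℝ) ^ (((t:ℝ)-2)/((t:ℝ)-1)) + 1⌉₊ :=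
          (Nat.ceil_add_one h0).symm
      _ ≤ ⌈(((t:ℝ)+1)^(t-1) * ((t:ℝ)-1)) * (n:ℝ) ^ (((t:ℝ)-2)/((t:ℝ)-1))⌉₊ :=
          Nat.ceil_le_ceil hana
theorem stmt_15 (t : ℕ) (ht : 2 ≤ t) :
    ∃ C : ℝ, 0 < C ∧
      ∀ (V : Type) [Fintype V] (G : SimpleGraph V), G.cliqueNum < t →
        G.chromaticNumber ≤
          ((⌈C * (Fintype.card V : ℝ) ^ (((t : ℝ) - 2) / ((t : ℝ) - 1))⌉₊ : ℕ) : ℕ∞) := by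
  rcases eq_or_lt_of_le ht with heq | ht3
  · -- t = 2
    refine ⟨1, one_pos, ?_⟩
    intro V _ G hclique
    classical
    subst heq
    have hone : (⌈(1:ℝ) * (Fintype.card V : ℝ) ^ (((2:ℕ) : ℝ) - 2) / (((2:ℕ):ℝ) - 1)⌉₊ : ℕ) = 1
        := by norm_num
    have hγ : (((2:ℕ) : ℝ) - 2) / (((2:ℕ) : ℝ) - 1) = 0 := by norm_num
    rw [hγ, Real.rpow_zero, mul_one]
    norm_num
    have hcol : G.Colorable 1 := by
      refine ⟨SimpleGraph.Coloring.mk (fun _ => (0 : Fin 1)) ?_⟩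
      intro u w huw
      exfalso
      have hcl : G.IsNClique 2 {u, w} := by
        constructor
        · rw [Finset.coe_pair]
          exact isClique_pair.mpr (fun _ => huw)
        · exact Finset.card_pair huw.ne
      have := IsClique.card_le_cliqueNum (tc := hcl.1)
      rw [hcl.2] at this
      omega
    exact chromaticNumber_le_iff_colorable.mpr hcol
  · -- t ≥ 3
    have ht' : 3 ≤ t := ht3
    refine ⟨((t:ℝ) + 1) ^ (t - 1) * ((t:ℝ) - 1), ?_, ?_⟩
    · have hT : (3:ℝ) ≤ (t:ℝ) := by exact_mod_cast ht'
      have h1 : (0:ℝ) < (t:ℝ) - 1 := by linarith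
      positivity
    · intro V _ G hclique
      have hG : ¬ ∃ x : Finset V, G.IsNClique t x := by
        rintro ⟨x, hx⟩
        have := IsClique.card_le_cliqueNum (tc := hx.1)
        rw [hx.2] at this
        omega
      have hcol := aux_main t ht' (Fintype.card V) V G rfl hG
      exact chromaticNumber_le_iff_colorable.mpr hcol
end

section
/- For every real r with 0 < r < 1, the sequence Q(n, ⌈rn⌉) tends to infinity as n → ∞, where Q(n,c) = min{ω(G) : |V(G)| = n and χ(G) = c}. -/
open Finset SimpleGraph

lemma singleton_clique' {V : Type} (G : SimpleGraph V) (v : V) :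
    G.IsClique ({v} : Finset V) := by
  rw [Finset.coe_singleton]
  exact Set.pairwise_singleton _ _

-- Ramsey-type lemma
lemma ramsey_aux {V : Type} [DecidableEq V] (G : SimpleGraph V) [DecidableRel G.Adj] :
    ∀ (N k t : ℕ) (s : Finset V), k + t ≤ N → (k + t).choose k ≤ s.card →
    (∃ c : Finset V, c ⊆ s ∧ G.IsClique (c : Set V) ∧ c.card = k + 1) ∨
    (∃ i : Finset V, i ⊆ s ∧ (∀ a ∈ i, ∀ b ∈ i, ¬ G.Adj a b) ∧ i.card = t + 1) := by
  intro N
  induction N with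
  | zero =>
    intro k t s hkt hcard
    have hk : k = 0 := by omega
    subst hk
    rw [Nat.choose_zero_right] at hcard
    obtain ⟨v, hv⟩ : s.Nonempty := Finset.card_pos.mp (by omega)
    exact Or.inl ⟨{v}, Finset.singleton_subset_iff.mpr hv, singleton_clique' G v,
      Finset.card_singleton v⟩
  | succ N ih =>
    intro k t s hkt hcard
    match k, t with
    | 0, t =>
      rw [Nat.choose_zero_right] at hcard
      obtain ⟨v, hv⟩ : s.Nonempty := Finset.card_pos.mp (by omega)
      exact Or.inl ⟨{v}, Finset.singleton_subset_iff.mpr hv, singleton_clique' G v,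
        Finset.card_singleton v⟩
    | k+1, 0 =>
      have hps : 0 < (k + 1 + 0).choose (k+1) := Nat.choose_pos (by omega)
      obtain ⟨v, hv⟩ : s.Nonempty := Finset.card_pos.mp (by omega)
      refine Or.inr ⟨{v}, Finset.singleton_subset_iff.mpr hv, ?_, Finset.card_singleton v⟩
      intro a ha b hb
      rw [Finset.mem_singleton] at ha hb
      subst ha; subst hb; exact G.irrefl
    | k+1, t+1 =>
      have hpos : 0 < s.card := lt_of_lt_of_le (Nat.choose_pos (by omega)) hcard
      obtain ⟨v, hv⟩ : s.Nonempty := Finset.card_pos.mp hpos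
      set Ns := (s.erase v).filter (fun w => G.Adj v w) with hNs
      set Ms := (s.erase v).filter (fun w => ¬ G.Adj v w) with hMs
      have hsplit : Ns.card + Ms.card = s.card - 1 := by
        rw [hNs, hMs, Finset.card_filter_add_card_filter_not]
        rw [Finset.card_erase_of_mem hv]
      have hchoose : (k + 1 + (t + 1)).choose (k + 1)
          = (k + (t+1)).choose k + (k + 1 + t).choose (k+1) := by
        have h0 := Nat.choose_succ_succ (k + t + 1) k
        have h1 : k + 1 + (t + 1) = (k + t + 1) + 1 := by omega
        have h2 : k + (t + 1) = k + t + 1 := by omega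
        have h3 : k + 1 + t = k + t + 1 := by omega
        rw [h1, h2, h3, h0]
      have hcases : (k + (t+1)).choose k ≤ Ns.card ∨ (k + 1 + t).choose (k+1) ≤ Ms.card := by
        by_contra hcon
        push_neg at hcon
        omega
      have hNsub : Ns ⊆ s := fun x hx =>
        Finset.mem_of_mem_erase (Finset.mem_of_mem_filter _ hx)
      have hMsub : Ms ⊆ s := fun x hx =>
        Finset.mem_of_mem_erase (Finset.mem_of_mem_filter _ hx)
      rcases hcases with hN | hM
      · rcases ih k (t+1) Ns (by omega) hN with ⟨c, hcs, hcl, hcc⟩ | ⟨i, his, hii, hic⟩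
        · -- extend clique with v
          left
          have hvc : v ∉ c := fun h =>
            (Finset.mem_erase.mp (Finset.mem_of_mem_filter _ (hcs h))).1 rfl
          refine ⟨insert v c, ?_, ?_, ?_⟩
          · intro x hx
            rcases Finset.mem_insert.mp hx with h | h
            · exact h ▸ hv
            · exact hNsub (hcs h)
          · rw [Finset.coe_insert]
            refine hcl.insert ?_
            intro b hb _
            exact (Finset.mem_filter.mp (hcs hb)).2
          · rw [Finset.card_insert_of_notMem hvc, hcc]
        · exact Or.inr ⟨i, fun x hx => hNsub (his hx), hii, hic⟩
      · rcases ih (k+1) t Ms (by omega) hM with ⟨c, hcs, hcl, hcc⟩ | ⟨i, his, hii, hic⟩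
        · exact Or.inl ⟨c, fun x hx => hMsub (hcs hx), hcl, hcc⟩
        · -- extend indep set with v
          right
          have hvi : v ∉ i := fun h =>
            (Finset.mem_erase.mp (Finset.mem_of_mem_filter _ (his h))).1 rfl
          have hnadj : ∀ b ∈ i, ¬ G.Adj v b := fun b hb =>
            (Finset.mem_filter.mp (his hb)).2
          refine ⟨insert v i, ?_, ?_, ?_⟩
          · intro x hx
            rcases Finset.mem_insert.mp hx with h | h
            · exact h ▸ hv
            · exact hMsub (his h)
          · intro a ha b hb
            rcases Finset.mem_insert.mp ha with h1 | h1 <;>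
              rcases Finset.mem_insert.mp hb with h2 | h2
            · subst h1; subst h2; exact G.irrefl
            · subst h1; exact hnadj b h2
            · subst h2; intro h; exact hnadj a h1 h.symm
            · exact hii a h1 b h2
          · rw [Finset.card_insert_of_notMem hvi, hic]

open Finset SimpleGraph

-- extending a coloring of the complement of an independent set
lemma colorable_insert {V : Type} [DecidableEq V] (G : SimpleGraph V) (i : Finset V)
    (hi : ∀ a ∈ i, ∀ b ∈ i, ¬ G.Adj a b) (m : ℕ)
    (hc : (G.induce ((↑i : Set V)ᶜ)).Colorable m) : G.Colorable (m + 1) := by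
  obtain ⟨C⟩ := hc
  refine ⟨SimpleGraph.Coloring.mk
    (fun v => if h : v ∈ i then (Fin.last m) else (C ⟨v, by simpa using h⟩).castSucc) ?_⟩
  intro a b hab
  by_cases ha : a ∈ i <;> by_cases hb : b ∈ i
  · exact absurd hab (hi a ha b hb)
  · simp only [dif_pos ha, dif_neg hb]
    exact fun h => absurd h.symm (Fin.castSucc_lt_last _).ne
  · simp only [dif_neg ha, dif_pos hb]
    exact fun h => absurd h (Fin.castSucc_lt_last _).ne
  · simp only [dif_neg ha, dif_neg hb]
    intro h
    have hadj : (G.induce ((↑i : Set V)ᶜ)).Adj ⟨a, by simpa using ha⟩ ⟨b, by simpa using hb⟩ := hab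
    exact C.valid hadj (Fin.castSucc_injective m h)

lemma colorable_of_cliqueFree_aux (k t : ℕ) :
    ∀ (n : ℕ) (V : Type) [Fintype V] [DecidableEq V] (G : SimpleGraph V),
    Fintype.card V ≤ n → G.CliqueFree (k + 1) →
    G.Colorable (Fintype.card V / (t + 1) + (k + t).choose k) := by
  intro n
  induction n with
  | zero =>
    intro V _ _ G hcard _
    have h0 : Fintype.card V = 0 := Nat.le_zero.mp hcard
    exact (G.colorable_of_fintype).mono (by rw [h0]; exact Nat.zero_le _)
  | succ n ih =>
    intro V _ _ G hcard hfree
    classical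
    by_cases hm : Fintype.card V < (k + t).choose k
    · exact (G.colorable_of_fintype).mono
        (le_trans (le_of_lt hm) (Nat.le_add_left _ _))
    · push_neg at hm
      have hcu : (k + t).choose k ≤ (Finset.univ : Finset V).card := by
        rwa [Finset.card_univ]
      rcases ramsey_aux G (k + t) k t Finset.univ le_rfl hcu with
        ⟨c, _, hcl, hcc⟩ | ⟨i, _, hii, hic⟩
      · exact absurd ⟨hcl, hcc⟩ (hfree c)
      · have hcardi : Fintype.card ((↑i : Set V)ᶜ : Set V) = Fintype.card V - (t + 1) := by
          rw [Fintype.card_compl_set]; simp [hic]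
        have hile : i.card ≤ Fintype.card V := Finset.card_le_univ i
        have hfree' : (G.induce ((↑i : Set V)ᶜ)).CliqueFree (k + 1) :=
          hfree.comap (SimpleGraph.Embedding.induce _).isContained
        have hcol := ih ((↑i : Set V)ᶜ : Set V) (G.induce _) (by rw [hcardi]; omega) hfree'
        have hext := colorable_insert G i hii _ hcol
        refine hext.mono ?_
        have hdiv : Fintype.card V / (t + 1)
            = Fintype.card ((↑i : Set V)ᶜ : Set V) / (t + 1) + 1 := by
          rw [hcardi]
          have h1 : Fintype.card V - (t + 1) + (t + 1) = Fintype.card V := by omega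
          conv_lhs => rw [← h1]
          rw [Nat.add_div_right _ (Nat.succ_pos t)]
        omega

lemma exists_chromatic (n c : ℕ) (h1 : 1 ≤ c) (h2 : c ≤ n) :
    ∃ G : SimpleGraph (Fin n), G.chromaticNumber = (c : ℕ∞) := by
  have hc : c - 1 < c := by omega
  let f : Fin n → Fin c := fun v => ⟨min v (c - 1), lt_of_le_of_lt (min_le_right _ _) hc⟩
  refine ⟨SimpleGraph.comap f ⊤, ?_⟩
  have hcol : (SimpleGraph.comap f ⊤).Colorable c :=
    ⟨SimpleGraph.Coloring.mk f (fun h => (SimpleGraph.comap_adj.mp h).ne)⟩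
  let g : Fin c → Fin n := fun j => ⟨j, lt_of_lt_of_le j.2 h2⟩
  have hginj : Function.Injective g := fun a b hab => by
    have h := congrArg Fin.val hab
    simp only [g] at h
    exact Fin.ext h
  have hfg : ∀ j : Fin c, f (g j) = j := by
    intro j
    apply Fin.ext
    have : (j : ℕ) ≤ c - 1 := by omega
    simp [f, g, this]
  have hclique : (SimpleGraph.comap f ⊤).IsClique (↑(Finset.univ.image g) : Set (Fin n)) := by
    intro a ha b hb hne
    simp only [Finset.coe_image, Set.mem_image, Finset.mem_coe, Finset.coe_univ,
      Set.image_univ, Set.mem_range] at ha hb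
    obtain ⟨j, rfl⟩ := ha
    obtain ⟨j', rfl⟩ := hb
    have hjj : j ≠ j' := fun h => hne (by rw [h])
    show (⊤ : SimpleGraph (Fin c)).Adj (f (g j)) (f (g j'))
    rw [SimpleGraph.top_adj, hfg, hfg]
    exact hjj
  have hcards : (Finset.univ.image g).card = c := by
    rw [Finset.card_image_of_injective _ hginj, Finset.card_univ, Fintype.card_fin]
  have hlow := hclique.card_le_chromaticNumber
  rw [hcards] at hlow
  exact le_antisymm hcol.chromaticNumber_le hlow


noncomputable def Q (n c : ℕ) : ℕ :=
  sInf {m : ℕ | ∃ G : SimpleGraph (Fin n),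
    G.chromaticNumber = (c : ℕ∞) ∧ G.cliqueNum = m}

theorem stmt_16 (r : ℝ) (hr0 : 0 < r) (hr1 : r < 1) :
    Filter.Tendsto (fun n : ℕ => Q n ⌈r * n⌉₊) Filter.atTop Filter.atTop := by
  rw [Filter.tendsto_atTop]
  intro b
  match b with
  | 0 => exact Filter.Eventually.of_forall (fun _ => Nat.zero_le _)
  | k + 1 =>
    set t : ℕ := ⌈2 / r⌉₊ with ht
    set C : ℕ := (k + t).choose k with hC
    rw [Filter.eventually_atTop]
    refine ⟨max 1 ⌈2 * (C + 1) / r⌉₊, fun n hn => ?_⟩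
    have hn1 : 1 ≤ n := le_trans (le_max_left _ _) hn
    have hn2 : (2 * ((C : ℝ) + 1) / r) ≤ n := by
      have := le_trans (le_max_right 1 ⌈2 * (C + 1) / r⌉₊) hn
      have h := Nat.ceil_le.mp this
      push_cast at h ⊢
      exact h
    have hrn2 : 2 * ((C : ℝ) + 1) ≤ r * n := by
      rw [div_le_iff₀ hr0] at hn2
      linarith [hn2]
    set c : ℕ := ⌈r * n⌉₊ with hcdef
    have hc1 : 1 ≤ c := by
      have hnpos : (0 : ℝ) < n := by exact_mod_cast hn1
      exact Nat.ceil_pos.mpr (mul_pos hr0 hnpos)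
    have hc2 : c ≤ n := by
      apply Nat.ceil_le.mpr
      calc r * n ≤ 1 * n := by
            apply mul_le_mul_of_nonneg_right hr1.le (Nat.cast_nonneg n)
        _ = (n : ℝ) := one_mul _
    -- lower bound on r * n as real vs c
    have hrc : r * n ≤ (c : ℝ) := Nat.le_ceil _
    -- the set is nonempty
    obtain ⟨G₀, hG₀⟩ := exists_chromatic n c hc1 hc2
    refine le_csInf ⟨G₀.cliqueNum, G₀, hG₀, rfl⟩ ?_
    rintro m ⟨G, hchi, rfl⟩
    by_contra hcontra
    push_neg at hcontra
    -- G is CliqueFree (k+1)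
    have hfree : G.CliqueFree (k + 1) := by
      intro u hu
      have hle : u.card ≤ G.cliqueNum :=
        SimpleGraph.IsClique.card_le_cliqueNum (tc := hu.isClique)
      rw [hu.card_eq] at hle
      omega
    have hcol := colorable_of_cliqueFree_aux k t n (Fin n) G (by simp) hfree
    have hchile := hcol.chromaticNumber_le
    rw [hchi] at hchile
    have hcle : c ≤ Fintype.card (Fin n) / (t + 1) + C := by
      exact_mod_cast hchile
    rw [Fintype.card_fin] at hcle
    -- now derive a contradiction over the reals
    have hdivle : ((n / (t + 1) : ℕ) : ℝ) ≤ (n : ℝ) / (t + 1) := by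
      exact_mod_cast Nat.cast_div_le
    have htge : (2 / r : ℝ) ≤ (t : ℝ) + 1 := by
      have := Nat.le_ceil (2 / r)
      rw [← ht] at this
      linarith
    have h2r : (0 : ℝ) < 2 / r := by positivity
    have hnn : (0 : ℝ) ≤ (n : ℝ) := Nat.cast_nonneg n
    have hfrac : (n : ℝ) / ((t : ℝ) + 1) ≤ (n : ℝ) / (2 / r) :=
      div_le_div_of_nonneg_left hnn h2r htge
    have heq : (n : ℝ) / (2 / r) = r * n / 2 := by
      field_simp
    have hcreal : (c : ℝ) ≤ (n : ℝ) / ((t : ℝ) + 1) + C := by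
      calc (c : ℝ) ≤ ((n / (t + 1) + C : ℕ) : ℝ) := by exact_mod_cast hcle
        _ = ((n / (t + 1) : ℕ) : ℝ) + C := by push_cast; ring
        _ ≤ (n : ℝ) / ((t : ℝ) + 1) + C := by push_cast at hdivle ⊢; linarith
    linarith [hcreal, hfrac, heq, hrc, hrn2]
end
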